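/- arXiv:2001.11940 — 4 statements merged into one kernel-verified Lean document; each statement's English description precedes it below -/
import Mathlib

section
/- Assume the component MAGs M^(1), …, M^(K) are compatible with the same poset. Let a, b ∈ V and C ⊆ V \ {a, b}. If for some i, k ∈ {1, …, K} there is a d-connecting path given [C] between a^(i) and b^(k) in M_μ, then there is a d-connecting path given C between a and b in the union graph M_∪. -/
set_option maxHeartbeats 1000000

attribute [local instance] Classical.propDecidable

universe u

/-- A mixed graph: directed edges `dir u v` (u → v) and bidirected edges `bidir u v` (u ↔ v). -/
structure MixedGraph (α : Type u) where
  dir : α → α → Prop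
  bidir : α → α → Prop

namespace MixedGraph

variable {α : Type u}

/-- There is a bidirected edge between `u` and `v`. -/
def Bid (G : MixedGraph α) (u v : α) : Prop := G.bidir u v ∨ G.bidir v u

/-- `u` is an ancestor of `v`: `u = v` or there is a directed path from `u` to `v`. -/
def Anc (G : MixedGraph α) : α → α → Prop := Relation.ReflTransGen G.dir

/-- No directed cycles. -/
def Acyclic (G : MixedGraph α) : Prop := ∀ u v, G.dir u v → ¬ G.Anc v u

/-- An ancestral graph: acyclic, and no endpoint of a bidirected edge is an ancestor
of the other endpoint. -/
def Ancestral (G : MixedGraph α) : Prop :=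
  G.Acyclic ∧ ∀ u v, G.Bid u v → ¬ G.Anc u v

/-- `G` is a DAG: acyclic with no bidirected edges. -/
def IsDAG (G : MixedGraph α) : Prop := G.Acyclic ∧ ∀ u v, ¬ G.bidir u v

/-- `u` and `v` are adjacent (joined by some edge). -/
def Adj (G : MixedGraph α) (u v : α) : Prop :=
  G.dir u v ∨ G.dir v u ∨ G.Bid u v

/-- A walk in a mixed graph, recording for each step which kind of edge is traversed:
`consF` traverses `a → b`, `consB` traverses `b → a` (from `a`'s side),
`consBi` traverses `a ↔ b`. -/
inductive Walk (G : MixedGraph α) : α → α → Type u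
  | nil (a : α) : Walk G a a
  | consF {a b c : α} (h : G.dir a b) (w : Walk G b c) : Walk G a c
  | consB {a b c : α} (h : G.dir b a) (w : Walk G b c) : Walk G a c
  | consBi {a b c : α} (h : G.Bid a b) (w : Walk G b c) : Walk G a c

namespace Walk

variable {G : MixedGraph α}

/-- The list of vertices visited by a walk. -/
def support {a b : α} (w : G.Walk a b) : List α :=
  match a, b, w with
  | a, _, .nil _ => [a]
  | a, _, .consF _ w' => a :: w'.support
  | a, _, .consB _ w' => a :: w'.support
  | a, _, .consBi _ w' => a :: w'.support

/-- A path is a walk whose vertices are pairwise distinct. -/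
def IsPath {a b : α} (w : G.Walk a b) : Prop := w.support.Nodup

/-- The first edge of the walk has an arrowhead at the initial vertex. -/
def arrowAtStart {a b : α} (w : G.Walk a b) : Prop :=
  match a, b, w with
  | _, _, .nil _ => False
  | _, _, .consF _ _ => False
  | _, _, .consB _ _ => True
  | _, _, .consBi _ _ => True

/-- The last edge of the walk has an arrowhead at the final vertex. -/
def arrowAtEnd {a b : α} (w : G.Walk a b) : Prop :=
  match a, b, w with
  | _, _, .nil _ => False
  | _, _, .consF _ (.nil _) => True
  | _, _, .consB _ (.nil _) => False
  | _, _, .consBi _ (.nil _) => True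
  | _, _, .consF _ w' => w'.arrowAtEnd
  | _, _, .consB _ w' => w'.arrowAtEnd
  | _, _, .consBi _ w' => w'.arrowAtEnd

/-- The last edge of the walk has a tail at the final vertex. -/
def tailAtEnd {a b : α} (w : G.Walk a b) : Prop :=
  match a, b, w with
  | _, _, .nil _ => False
  | _, _, .consF _ (.nil _) => False
  | _, _, .consB _ (.nil _) => True
  | _, _, .consBi _ (.nil _) => False
  | _, _, .consF _ w' => w'.tailAtEnd
  | _, _, .consB _ w' => w'.tailAtEnd
  | _, _, .consBi _ w' => w'.tailAtEnd

/-- Number of bidirected edges traversed by the walk. -/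
def bidirCount {a b : α} (w : G.Walk a b) : ℕ :=
  match a, b, w with
  | _, _, .nil _ => 0
  | _, _, .consF _ w' => w'.bidirCount
  | _, _, .consB _ w' => w'.bidirCount
  | _, _, .consBi _ w' => w'.bidirCount + 1

end Walk

/-- The condition for an internal vertex `a` of a path to be active given `C`:
if it is a collider it must be an ancestor of a node of `C`,
and if it is a non-collider it must lie outside `C`. -/
def activeVertex (G : MixedGraph α) (C : Set α) (a : α) (collider : Prop) : Prop :=
  (collider ∧ ∃ z ∈ C, G.Anc a z) ∨ (¬ collider ∧ a ∉ C)

namespace Walk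

variable {G : MixedGraph α}

/-- Given that the edge entering the initial vertex of `w` from the previous part of
the path has an arrowhead at it iff `arrowIn`, this checks the activity condition at
that vertex (trivial if `w` is the empty walk, i.e. the vertex is an endpoint). -/
def junctionOK (C : Set α) (arrowIn : Prop) {a b : α} (w : G.Walk a b) : Prop :=
  match a, b, w with
  | _, _, .nil _ => True
  | a, _, .consF _ _ => G.activeVertex C a (arrowIn ∧ False)
  | a, _, .consB _ _ => G.activeVertex C a (arrowIn ∧ True)
  | a, _, .consBi _ _ => G.activeVertex C a (arrowIn ∧ True)

/-- The walk is d-connecting given `C`: every collider on it is an ancestor of a node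
in `C`, and every non-collider on it lies outside `C`. -/
def DConn (C : Set α) {a b : α} (w : G.Walk a b) : Prop :=
  match a, b, w with
  | _, _, .nil _ => True
  | _, _, .consF _ w' => w'.junctionOK C True ∧ w'.DConn C
  | _, _, .consB _ w' => w'.junctionOK C False ∧ w'.DConn C
  | _, _, .consBi _ w' => w'.junctionOK C True ∧ w'.DConn C

end Walk

/-- `A` and `B` are d-separated given `C`: no path between a node of `A` and a node
of `B` is d-connecting given `C`. -/
def DSep (G : MixedGraph α) (A B C : Set α) : Prop :=
  ∀ ⦃a⦄, a ∈ A → ∀ ⦃b⦄, b ∈ B → ∀ w : G.Walk a b, w.IsPath → ¬ w.DConn C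

/-- A maximal ancestral graph: ancestral, and every pair of distinct non-adjacent
vertices is d-separated given some subset of the remaining vertices. -/
def IsMAG (G : MixedGraph α) : Prop :=
  G.Ancestral ∧ ∀ u v, u ≠ v → ¬ G.Adj u v →
    ∃ C : Set α, u ∉ C ∧ v ∉ C ∧ G.DSep {u} {v} C

end MixedGraph

open MixedGraph

/-- Ancestor relation of a directed edge relation. -/
def AncE {β : Type u} (E : β → β → Prop) : β → β → Prop := Relation.ReflTransGen E

/-- `u` and `v` are distinct children of the marginalized vertex `y = Sum.inr ()`. -/
def chPair {α : Type u} (E : (α ⊕ Unit) → (α ⊕ Unit) → Prop) (u v : α) : Prop :=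
  u ≠ v ∧ E (Sum.inr ()) (Sum.inl u) ∧ E (Sum.inr ()) (Sum.inl v)

/-- The marginal ancestral graph of the DAG `E` on `α ⊕ Unit` with respect to the vertex
`y = Sum.inr ()` (Algorithm 1): keep directed edges among `α`; add `u ↔ v` for distinct
children `u, v` of `y`; for `t → u ∈ E` and added `u ↔ v` with `u` an ancestor of `v`,
add `t → v`; finally replace each added `u ↔ v` with `u ∈ an(v)` by `u → v`. -/
def marginalMAG {α : Type u} (E : (α ⊕ Unit) → (α ⊕ Unit) → Prop) : MixedGraph α where
  dir t v :=
    E (Sum.inl t) (Sum.inl v)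
    ∨ (∃ u, E (Sum.inl t) (Sum.inl u) ∧ chPair E u v ∧ AncE E (Sum.inl u) (Sum.inl v))
    ∨ (chPair E t v ∧ AncE E (Sum.inl t) (Sum.inl v))
  bidir u v :=
    chPair E u v ∧ ¬ AncE E (Sum.inl u) (Sum.inl v) ∧ ¬ AncE E (Sum.inl v) (Sum.inl u)

/-- The mixture DAG on `(Fin K × V) ⊕ Unit`, with `y = Sum.inr ()`: it consists of the
`K` component DAGs placed side by side, plus edges from `y` into every copy of every
node of `W`. -/
def mixtureDAG {V : Type u} (K : ℕ) (E : Fin K → V → V → Prop) (W : Set V) :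
    MixedGraph ((Fin K × V) ⊕ Unit) where
  dir x z :=
    (∃ j u v, E j u v ∧ x = Sum.inl (j, u) ∧ z = Sum.inl (j, v)) ∨
    (∃ j v, v ∈ W ∧ x = Sum.inr () ∧ z = Sum.inl (j, v))
  bidir _ _ := False

/-- The sub-DAG of the mixture DAG induced on the `j`-th copy `V⁽ʲ⁾ ∪ {y}`,
presented as an edge relation on `V ⊕ Unit`. -/
def componentDAGEdges {V : Type u} {K : ℕ} (E : Fin K → V → V → Prop) (W : Set V)
    (j : Fin K) : (V ⊕ Unit) → (V ⊕ Unit) → Prop := fun x z =>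
  (∃ u v, E j u v ∧ x = Sum.inl u ∧ z = Sum.inl v) ∨
  (∃ v, v ∈ W ∧ x = Sum.inr () ∧ z = Sum.inl v)

/-- The component MAG `M⁽ʲ⁾`: the marginal ancestral graph with respect to `y` of the
sub-DAG of the mixture DAG induced on `V⁽ʲ⁾ ∪ {y}`. -/
def componentMAG {V : Type u} {K : ℕ} (E : Fin K → V → V → Prop) (W : Set V)
    (j : Fin K) : MixedGraph V :=
  marginalMAG (componentDAGEdges E W j)

/-- The mixture MAG `M_μ`: the marginal ancestral graph of the mixture DAG with
respect to `y`. -/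
def mixtureMAG {V : Type u} (K : ℕ) (E : Fin K → V → V → Prop) (W : Set V) :
    MixedGraph (Fin K × V) :=
  marginalMAG (mixtureDAG K E W).dir

/-- The union graph `M_∪`: `u → v` iff `u → v` in some `M⁽ʲ⁾`, `u ↔ v` iff `u ↔ v` in
some `M⁽ʲ⁾`. -/
def unionGraph {V : Type u} {K : ℕ} (E : Fin K → V → V → Prop) (W : Set V) :
    MixedGraph V where
  dir u v := ∃ j, (componentMAG E W j).dir u v
  bidir u v := ∃ j, (componentMAG E W j).bidir u v

/-- Poset compatibility of the component MAGs: a strict partial order on `V` such that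
ancestry in every `M⁽ʲ⁾` respects the order and endpoints of bidirected edges of every
`M⁽ʲ⁾` are incomparable. -/
def PosetCompatible {V : Type u} {K : ℕ} (E : Fin K → V → V → Prop) (W : Set V) : Prop :=
  ∃ r : V → V → Prop, IsStrictOrder V r ∧
    (∀ j u v, (componentMAG E W j).Anc u v → u ≠ v → r u v) ∧
    (∀ j u v, (componentMAG E W j).bidir u v → ¬ r u v ∧ ¬ r v u)

/-- `[A]`: all `K` copies of the nodes of `A`, as a subset of the vertices of the
mixture DAG. -/
def liftSet {V : Type u} (K : ℕ) (A : Set V) : Set ((Fin K × V) ⊕ Unit) :=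
  {x | ∃ j a, a ∈ A ∧ x = Sum.inl (j, a)}

/-- `[A]` as a subset of `Fin K × V` (the vertices of the mixture MAG `M_μ`). -/
def copySet {V : Type u} (K : ℕ) (A : Set V) : Set (Fin K × V) := {p | p.2 ∈ A}

/-- `A⁽ʲ⁾` as a subset of the vertices `V ⊕ Unit` of a component sub-DAG. -/
def inlSet {V : Type u} (A : Set V) : Set (V ⊕ Unit) := {x | ∃ a ∈ A, x = Sum.inl a}

/-- Node `v` has different parent sets in different component DAGs. -/
def ParentsVary {V : Type u} {K : ℕ} (E : Fin K → V → V → Prop) (v : V) : Prop :=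
  ¬ ∀ j k u, E j u v ↔ E k u v

section Prob

variable {V : Type} [Fintype V] [DecidableEq V] {σ : V → Type} [∀ v, Fintype (σ v)]

/-- The marginal probability of the event that the coordinates in `S` agree with `x`. -/
noncomputable def marg (p : (∀ v, σ v) → ℝ) (S : Set V) (x : ∀ v, σ v) : ℝ :=
  ∑ y : ∀ v, σ v, if ∀ v ∈ S, y v = x v then p y else 0

/-- The conditional probability `p(x_S | x_C)`. -/
noncomputable def condProb (p : (∀ v, σ v) → ℝ) (S C : Set V) (x : ∀ v, σ v) : ℝ :=
  marg p (S ∪ C) x / marg p C x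

/-- Conditional independence `X_A ⟂ X_B | X_C` in `p`:
`p(x_A, x_B | x_C) = p(x_A | x_C) · p(x_B | x_C)` whenever `p(x_C) > 0`. -/
def CondIndep (p : (∀ v, σ v) → ℝ) (A B C : Set V) : Prop :=
  ∀ x, 0 < marg p C x →
    condProb p (A ∪ B) C x = condProb p A C x * condProb p B C x

/-- A strictly positive probability distribution on the product state space. -/
def IsPositiveDist (p : (∀ v, σ v) → ℝ) : Prop :=
  (∀ x, 0 < p x) ∧ ∑ x, p x = 1

/-- `p` factorizes according to the DAG with directed edge relation `Ed`:
`p(x) = ∏_v p(x_v | x_{pa(v)})`. -/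
def Factorizes (p : (∀ v, σ v) → ℝ) (Ed : V → V → Prop) : Prop :=
  ∀ x, p x = ∏ v, condProb p {v} {u | Ed u v} x

/-- Node `v` is invariant: its conditional given its parents is the same function in
all the component distributions. -/
def InvariantNode {K : ℕ} (E : Fin K → V → V → Prop)
    (p : Fin K → (∀ v, σ v) → ℝ) (v : V) : Prop :=
  ∀ j k x, condProb (p j) {v} {u | E j u v} x = condProb (p k) {v} {u | E k u v} x

end Prob

section WalkAux

namespace MixedGraph
namespace Walk

variable {α : Type u} {G : MixedGraph α} {C : Set α}

/-- Concatenation of walks. -/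
def append : ∀ {a b c : α}, G.Walk a b → G.Walk b c → G.Walk a c
  | _, _, _, .nil _, q => q
  | _, _, _, .consF h p, q => .consF h (append p q)
  | _, _, _, .consB h p, q => .consB h (append p q)
  | _, _, _, .consBi h p, q => .consBi h (append p q)

/-- The walk is trivial. -/
def IsNilW : ∀ {a b : α}, G.Walk a b → Prop
  | _, _, .nil _ => True
  | _, _, _ => False

lemma support_ne_nil {a b : α} (w : G.Walk a b) : w.support ≠ [] := by
  cases w <;> simp [support]

lemma support_append {a b c : α} (p : G.Walk a b) (q : G.Walk b c) :
    (p.append q).support = p.support.dropLast ++ q.support := by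
  induction p with
  | nil a => simp [append, support]
  | consF h p ih =>
    show _ :: (p.append q).support = (_ :: p.support).dropLast ++ q.support
    rw [List.dropLast_cons_of_ne_nil (support_ne_nil p), ih]; rfl
  | consB h p ih =>
    show _ :: (p.append q).support = (_ :: p.support).dropLast ++ q.support
    rw [List.dropLast_cons_of_ne_nil (support_ne_nil p), ih]; rfl
  | consBi h p ih =>
    show _ :: (p.append q).support = (_ :: p.support).dropLast ++ q.support
    rw [List.dropLast_cons_of_ne_nil (support_ne_nil p), ih]; rfl

/- junctionOK intro/elim lemmas -/

lemma junctionOK_consF_elim {s : Prop} {a x c : α} {h : G.dir a x} {w : G.Walk x c}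
    (hj : (Walk.consF h w).junctionOK C s) : a ∉ C := by
  rcases hj with ⟨⟨_, hf⟩, _⟩ | ⟨_, hn⟩
  · exact hf.elim
  · exact hn

lemma junctionOK_consB_elim {s : Prop} {a x c : α} {h : G.dir x a} {w : G.Walk x c}
    (hj : (Walk.consB h w).junctionOK C s) :
    (s ∧ ∃ z ∈ C, G.Anc a z) ∨ (¬ s ∧ a ∉ C) := by
  rcases hj with ⟨⟨hs, _⟩, hanc⟩ | ⟨hns, hn⟩
  · exact Or.inl ⟨hs, hanc⟩
  · exact Or.inr ⟨fun hs => hns ⟨hs, trivial⟩, hn⟩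

lemma junctionOK_consBi_elim {s : Prop} {a x c : α} {h : G.Bid a x} {w : G.Walk x c}
    (hj : (Walk.consBi h w).junctionOK C s) :
    (s ∧ ∃ z ∈ C, G.Anc a z) ∨ (¬ s ∧ a ∉ C) := by
  rcases hj with ⟨⟨hs, _⟩, hanc⟩ | ⟨hns, hn⟩
  · exact Or.inl ⟨hs, hanc⟩
  · exact Or.inr ⟨fun hs => hns ⟨hs, trivial⟩, hn⟩

lemma junctionOK_consF_intro {s : Prop} {a x c : α} (h : G.dir a x) (w : G.Walk x c)
    (hn : a ∉ C) : (Walk.consF h w).junctionOK C s :=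
  Or.inr ⟨fun hf => hf.2.elim, hn⟩

lemma junctionOK_consB_intro {s : Prop} {a x c : α} (h : G.dir x a) (w : G.Walk x c)
    (H : (s ∧ ∃ z ∈ C, G.Anc a z) ∨ (¬ s ∧ a ∉ C)) : (Walk.consB h w).junctionOK C s := by
  rcases H with ⟨hs, hanc⟩ | ⟨hns, hn⟩
  · exact Or.inl ⟨⟨hs, trivial⟩, hanc⟩
  · exact Or.inr ⟨fun hst => hns hst.1, hn⟩

lemma junctionOK_consBi_intro {s : Prop} {a x c : α} (h : G.Bid a x) (w : G.Walk x c)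
    (H : (s ∧ ∃ z ∈ C, G.Anc a z) ∨ (¬ s ∧ a ∉ C)) : (Walk.consBi h w).junctionOK C s := by
  rcases H with ⟨hs, hanc⟩ | ⟨hns, hn⟩
  · exact Or.inl ⟨⟨hs, trivial⟩, hanc⟩
  · exact Or.inr ⟨fun hst => hns hst.1, hn⟩

/-- If the start vertex is outside `C` and the in-edge has a tail there,
any continuation is fine. -/
lemma junctionOK_of_not {s : Prop} {a c : α} (w : G.Walk a c) (hn : a ∉ C) (hs : ¬ s) :
    w.junctionOK C s := by
  cases w with
  | nil => trivial
  | consF h w => exact junctionOK_consF_intro h w hn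
  | consB h w => exact junctionOK_consB_intro h w (Or.inr ⟨hs, hn⟩)
  | consBi h w => exact junctionOK_consBi_intro h w (Or.inr ⟨hs, hn⟩)

/-- Transfer: a walk that is junction-OK for an arrowhead-in can serve any in-status
whose activity data is available. -/
lemma junctionOK_transfer {a c : α} (w : G.Walk a c) (hT : w.junctionOK C True) :
    ∀ s : Prop, ((s ∧ ∃ z ∈ C, G.Anc a z) ∨ (¬ s ∧ a ∉ C)) → w.junctionOK C s := by
  intro s H
  cases w with
  | nil => trivial
  | consF h w => exact junctionOK_consF_intro h w (junctionOK_consF_elim hT)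
  | consB h w => exact junctionOK_consB_intro h w H
  | consBi h w => exact junctionOK_consBi_intro h w H

lemma junctionOK_append {s : Prop} {a v c : α} (p : G.Walk a v) (q : G.Walk v c)
    (hp : ¬ p.IsNilW) : (p.append q).junctionOK C s ↔ p.junctionOK C s := by
  cases p with
  | nil => exact absurd trivial hp
  | consF h p => exact Iff.rfl
  | consB h p => exact Iff.rfl
  | consBi h p => exact Iff.rfl

lemma dconn_append_left {a v c : α} {p : G.Walk a v} {q : G.Walk v c}
    (hD : (p.append q).DConn C) : p.DConn C := by
  induction p with
  | nil => trivial
  | consF h p ih =>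
    obtain ⟨hj, hD⟩ := hD
    refine ⟨?_, ih hD⟩
    cases p with
    | nil => trivial
    | consF h' p' => exact hj
    | consB h' p' => exact hj
    | consBi h' p' => exact hj
  | consB h p ih =>
    obtain ⟨hj, hD⟩ := hD
    refine ⟨?_, ih hD⟩
    cases p with
    | nil => trivial
    | consF h' p' => exact hj
    | consB h' p' => exact hj
    | consBi h' p' => exact hj
  | consBi h p ih =>
    obtain ⟨hj, hD⟩ := hD
    refine ⟨?_, ih hD⟩
    cases p with
    | nil => trivial
    | consF h' p' => exact hj
    | consB h' p' => exact hj
    | consBi h' p' => exact hj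

lemma dconn_append_right {a v c : α} {p : G.Walk a v} {q : G.Walk v c}
    (hD : (p.append q).DConn C) : q.DConn C := by
  induction p with
  | nil => exact hD
  | consF h p ih => exact ih hD.2
  | consB h p ih => exact ih hD.2
  | consBi h p ih => exact ih hD.2

lemma dconn_append_end {a v c : α} {p : G.Walk a v} {q : G.Walk v c}
    (hD : (p.append q).DConn C) (hp : ¬ p.IsNilW) :
    q.junctionOK C p.arrowAtEnd := by
  induction p with
  | nil => exact absurd trivial hp
  | consF h p ih =>
    cases p with
    | nil => exact hD.1
    | consF h' p' => exact ih hD.2 (fun hf => hf)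
    | consB h' p' => exact ih hD.2 (fun hf => hf)
    | consBi h' p' => exact ih hD.2 (fun hf => hf)
  | consB h p ih =>
    cases p with
    | nil => exact hD.1
    | consF h' p' => exact ih hD.2 (fun hf => hf)
    | consB h' p' => exact ih hD.2 (fun hf => hf)
    | consBi h' p' => exact ih hD.2 (fun hf => hf)
  | consBi h p ih =>
    cases p with
    | nil => exact hD.1
    | consF h' p' => exact ih hD.2 (fun hf => hf)
    | consB h' p' => exact ih hD.2 (fun hf => hf)
    | consBi h' p' => exact ih hD.2 (fun hf => hf)

lemma dconn_append_intro {a v c : α} {p : G.Walk a v} {q : G.Walk v c}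
    (hp : p.DConn C) (hq : q.DConn C) (hend : ¬ p.IsNilW → q.junctionOK C p.arrowAtEnd) :
    (p.append q).DConn C := by
  induction p with
  | nil => exact hq
  | consF h p ih =>
    refine ⟨?_, ih hp.2 hq ?_⟩
    · cases p with
      | nil => exact hend (fun hf => hf)
      | consF h' p' => exact hp.1
      | consB h' p' => exact hp.1
      | consBi h' p' => exact hp.1
    · cases p with
      | nil => intro hf; exact absurd trivial hf
      | consF h' p' => intro _; exact hend (fun hf => hf)
      | consB h' p' => intro _; exact hend (fun hf => hf)
      | consBi h' p' => intro _; exact hend (fun hf => hf)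
  | consB h p ih =>
    refine ⟨?_, ih hp.2 hq ?_⟩
    · cases p with
      | nil => exact hend (fun hf => hf)
      | consF h' p' => exact hp.1
      | consB h' p' => exact hp.1
      | consBi h' p' => exact hp.1
    · cases p with
      | nil => intro hf; exact absurd trivial hf
      | consF h' p' => intro _; exact hend (fun hf => hf)
      | consB h' p' => intro _; exact hend (fun hf => hf)
      | consBi h' p' => intro _; exact hend (fun hf => hf)
  | consBi h p ih =>
    refine ⟨?_, ih hp.2 hq ?_⟩
    · cases p with
      | nil => exact hend (fun hf => hf)
      | consF h' p' => exact hp.1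
      | consB h' p' => exact hp.1
      | consBi h' p' => exact hp.1
    · cases p with
      | nil => intro hf; exact absurd trivial hf
      | consF h' p' => intro _; exact hend (fun hf => hf)
      | consB h' p' => intro _; exact hend (fun hf => hf)
      | consBi h' p' => intro _; exact hend (fun hf => hf)

end Walk
end MixedGraph

end WalkAux

section WalkAux2

namespace MixedGraph

variable {α : Type u} {G : MixedGraph α} {C : Set α} {ρ : α → α → Prop}

lemma anc_to_rel (hGr : ∀ u v, G.dir u v → ρ u v) (htr : ∀ {x y z}, ρ x y → ρ y z → ρ x z)
    {x y : α} (h : G.Anc x y) : x = y ∨ ρ x y := by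
  induction h with
  | refl => exact Or.inl rfl
  | tail h1 h2 ih =>
    rcases ih with rfl | hr
    · exact Or.inr (hGr _ _ h2)
    · exact Or.inr (htr hr (hGr _ _ h2))

/-- The directed-run lemma: if a walk is d-connecting and its start junction is fine
for an arrowhead-in, then either the start is an ancestor of `C` or it is an ancestor
of the end of the walk. -/
lemma run_lemma {y z : α} (w : G.Walk y z) (hD : w.DConn C) (hj : w.junctionOK C True) :
    (∃ c ∈ C, G.Anc y c) ∨ G.Anc y z := by
  induction w with
  | nil => exact Or.inr Relation.ReflTransGen.refl
  | consF h w ih =>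
    rcases ih hD.2 hD.1 with ⟨c, hc, hanc⟩ | hanc
    · exact Or.inl ⟨c, hc, Relation.ReflTransGen.head h hanc⟩
    · exact Or.inr (Relation.ReflTransGen.head h hanc)
  | consB h w ih =>
    rcases Walk.junctionOK_consB_elim hj with ⟨_, hanc⟩ | ⟨hns, _⟩
    · exact Or.inl hanc
    · exact absurd trivial hns
  | consBi h w ih =>
    rcases Walk.junctionOK_consBi_elim hj with ⟨_, hanc⟩ | ⟨hns, _⟩
    · exact Or.inl hanc
    · exact absurd trivial hns

lemma split_at_mem {x y : α} (w : G.Walk x y) (v : α) (hv : v ∈ w.support) :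
    ∃ (p : G.Walk x v) (q : G.Walk v y), w = p.append q := by
  induction w with
  | nil a =>
    obtain rfl : v = a := by simpa [Walk.support] using hv
    exact ⟨.nil v, .nil v, rfl⟩
  | @consF a b c h w ih =>
    rcases List.mem_cons.mp hv with rfl | hv'
    · exact ⟨.nil v, .consF h w, rfl⟩
    · obtain ⟨p, q, rfl⟩ := ih hv'
      exact ⟨.consF h p, q, rfl⟩
  | @consB a b c h w ih =>
    rcases List.mem_cons.mp hv with rfl | hv'
    · exact ⟨.nil v, .consB h w, rfl⟩
    · obtain ⟨p, q, rfl⟩ := ih hv'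
      exact ⟨.consB h p, q, rfl⟩
  | @consBi a b c h w ih =>
    rcases List.mem_cons.mp hv with rfl | hv'
    · exact ⟨.nil v, .consBi h w, rfl⟩
    · obtain ⟨p, q, rfl⟩ := ih hv'
      exact ⟨.consBi h p, q, rfl⟩

lemma exists_loop_decomp {x y : α} (w : G.Walk x y) (hnd : ¬ w.support.Nodup) :
    ∃ (v : α) (p : G.Walk x v) (m : G.Walk v v) (q : G.Walk v y),
      ¬ m.IsNilW ∧ w = p.append (m.append q) := by
  induction w with
  | nil => exact absurd (by simp [Walk.support]) hnd
  | @consF x b y h w ih =>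
    by_cases hmem : x ∈ w.support
    · obtain ⟨m', q, rfl⟩ := split_at_mem w x hmem
      exact ⟨x, .nil x, .consF h m', q, fun hf => hf, rfl⟩
    · have : ¬ w.support.Nodup := by
        intro hn; exact hnd (List.nodup_cons.mpr ⟨hmem, hn⟩)
      obtain ⟨v, p, m, q, hm, rfl⟩ := ih this
      exact ⟨v, .consF h p, m, q, hm, rfl⟩
  | @consB x b y h w ih =>
    by_cases hmem : x ∈ w.support
    · obtain ⟨m', q, rfl⟩ := split_at_mem w x hmem
      exact ⟨x, .nil x, .consB h m', q, fun hf => hf, rfl⟩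
    · have : ¬ w.support.Nodup := by
        intro hn; exact hnd (List.nodup_cons.mpr ⟨hmem, hn⟩)
      obtain ⟨v, p, m, q, hm, rfl⟩ := ih this
      exact ⟨v, .consB h p, m, q, hm, rfl⟩
  | @consBi x b y h w ih =>
    by_cases hmem : x ∈ w.support
    · obtain ⟨m', q, rfl⟩ := split_at_mem w x hmem
      exact ⟨x, .nil x, .consBi h m', q, fun hf => hf, rfl⟩
    · have : ¬ w.support.Nodup := by
        intro hn; exact hnd (List.nodup_cons.mpr ⟨hmem, hn⟩)
      obtain ⟨v, p, m, q, hm, rfl⟩ := ih this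
      exact ⟨v, .consBi h p, m, q, hm, rfl⟩

lemma support_length_pos {x y : α} (w : G.Walk x y) : 1 ≤ w.support.length := by
  cases w <;> simp [Walk.support]

/-- From a d-connecting walk to a d-connecting path. -/
lemma walk_to_path (hGr : ∀ u v, G.dir u v → ρ u v)
    (hirr : ∀ x, ¬ ρ x x) (htr : ∀ {x y z}, ρ x y → ρ y z → ρ x z) :
    ∀ (n : ℕ) {a b : α} (w : G.Walk a b), w.support.length ≤ n → w.DConn C →
      ∃ p : G.Walk a b, p.IsPath ∧ p.DConn C := by
  intro n
  induction n with
  | zero => intro a b w hlen _; exact absurd (le_trans (support_length_pos w) hlen) (by omega)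
  | succ n ih =>
    intro a b w hlen hD
    by_cases hnd : w.support.Nodup
    · exact ⟨w, hnd, hD⟩
    obtain ⟨v, p, m, q, hm, rfl⟩ := exists_loop_decomp w hnd
    have hDp : p.DConn C := Walk.dconn_append_left hD
    have hDmq : (m.append q).DConn C := Walk.dconn_append_right hD
    have hDm : m.DConn C := Walk.dconn_append_left hDmq
    have hDq : q.DConn C := Walk.dconn_append_right hDmq
    have hj2 : q.junctionOK C m.arrowAtEnd := Walk.dconn_append_end hDmq hm
    -- the spliced walk
    have hDpq : (p.append q).DConn C := by
      refine Walk.dconn_append_intro hDp hDq ?_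
      intro hp
      have hj1 : (m.append q).junctionOK C p.arrowAtEnd := Walk.dconn_append_end hD hp
      have hj1' : m.junctionOK C p.arrowAtEnd := (Walk.junctionOK_append m q hm).mp hj1
      by_cases hs : p.arrowAtEnd
      · -- collider-style seam
        have hanc : ∃ c ∈ C, G.Anc v c := by
          cases m with
          | nil => exact absurd trivial hm
          | consF hm0 m0 =>
            rcases run_lemma m0 hDm.2 hDm.1 with ⟨c, hc, hanc⟩ | hanc
            · exact ⟨c, hc, Relation.ReflTransGen.head hm0 hanc⟩
            · rcases anc_to_rel hGr (fun h1 h2 => htr h1 h2) hanc with rfl | hr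
              · exact absurd (hGr _ _ hm0) (hirr _)
              · exact absurd (htr (hGr _ _ hm0) hr) (hirr _)
          | consB hm0 m0 =>
            rcases Walk.junctionOK_consB_elim hj1' with ⟨_, hanc⟩ | ⟨hns, _⟩
            · exact hanc
            · exact absurd hs hns
          | consBi hm0 m0 =>
            rcases Walk.junctionOK_consBi_elim hj1' with ⟨_, hanc⟩ | ⟨hns, _⟩
            · exact hanc
            · exact absurd hs hns
        cases q with
        | nil => trivial
        | consF h' q' => exact Walk.junctionOK_consF_intro h' q' (Walk.junctionOK_consF_elim hj2)
        | consB h' q' => exact Walk.junctionOK_consB_intro h' q' (Or.inl ⟨hs, hanc⟩)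
        | consBi h' q' => exact Walk.junctionOK_consBi_intro h' q' (Or.inl ⟨hs, hanc⟩)
      · -- tail seam
        have hvn : v ∉ C := by
          cases m with
          | nil => exact absurd trivial hm
          | consF h' m' => exact Walk.junctionOK_consF_elim hj1'
          | consB h' m' =>
            rcases Walk.junctionOK_consB_elim hj1' with ⟨hs', _⟩ | ⟨_, hn⟩
            · exact absurd hs' hs
            · exact hn
          | consBi h' m' =>
            rcases Walk.junctionOK_consBi_elim hj1' with ⟨hs', _⟩ | ⟨_, hn⟩
            · exact absurd hs' hs
            · exact hn
        exact Walk.junctionOK_of_not q hvn hs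
    refine ih (p.append q) ?_ hDpq
    -- length decrease
    have h1 := Walk.support_append p (m.append q)
    have h2 := Walk.support_append m q
    have h3 := Walk.support_append p q
    have hmlen : 2 ≤ m.support.length := by
      cases m with
      | nil => exact absurd trivial hm
      | consF h' m' => simpa [Walk.support] using support_length_pos m'
      | consB h' m' => simpa [Walk.support] using support_length_pos m'
      | consBi h' m' => simpa [Walk.support] using support_length_pos m'
    have hlen1 : (p.append (m.append q)).support.length =
        p.support.length - 1 + (m.support.length - 1 + q.support.length) := by
      rw [h1, h2]; simp [List.length_dropLast]
    have hlen3 : (p.append q).support.length = p.support.length - 1 + q.support.length := by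
      rw [h3]; simp [List.length_dropLast]
    omega

end MixedGraph

end WalkAux2

section MixAux

open MixedGraph

variable {V : Type u} {K : ℕ} {E : Fin K → V → V → Prop} {W : Set V}

/-- Antisymmetry of ancestry in a DAG. -/
lemma rt_antisymm (hdag : ∀ j, (MixedGraph.mk (E j) (fun _ _ => False)).Acyclic)
    {j : Fin K} {x y : V} (h1 : Relation.ReflTransGen (E j) x y)
    (h2 : Relation.ReflTransGen (E j) y x) : x = y := by
  rcases Relation.ReflTransGen.cases_head h1 with rfl | ⟨c, hxc, hcy⟩
  · rfl
  · exact absurd (hcy.trans h2) (hdag j x c hxc)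

lemma cde_inl {j : Fin K} {t v : V} :
    componentDAGEdges E W j (Sum.inl t) (Sum.inl v) ↔ E j t v := by
  simp [componentDAGEdges]

lemma chPair_comp {j : Fin K} {u v : V} :
    chPair (componentDAGEdges E W j) u v ↔ u ≠ v ∧ u ∈ W ∧ v ∈ W := by
  simp [chPair, componentDAGEdges]

lemma ancE_comp {j : Fin K} {u v : V} :
    AncE (componentDAGEdges E W j) (Sum.inl u) (Sum.inl v) ↔
      Relation.ReflTransGen (E j) u v := by
  constructor
  · intro h
    have key : ∀ (x y : V ⊕ Unit), Relation.ReflTransGen (componentDAGEdges E W j) x y →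
        ∀ u v : V, x = Sum.inl u → y = Sum.inl v → Relation.ReflTransGen (E j) u v := by
      intro x y h
      induction h using Relation.ReflTransGen.head_induction_on with
      | refl => intro u v h1 h2; rw [h1] at h2; cases h2; exact Relation.ReflTransGen.refl
      | head hstep _ ih =>
        intro u v h1 h2
        subst h1
        rcases hstep with ⟨u', v', hE, hu, hm⟩ | ⟨v', _, hu, _⟩
        · cases hu
          exact Relation.ReflTransGen.head hE (ih _ _ hm h2)
        · exact absurd hu (by simp)
    exact key _ _ h u v rfl rfl
  · intro h
    induction h with
    | refl => exact Relation.ReflTransGen.refl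
    | tail h1 h2 ih => exact Relation.ReflTransGen.tail ih (Or.inl ⟨_, _, h2, rfl, rfl⟩)

lemma dir_comp_iff {j : Fin K} {t v : V} :
    (componentMAG E W j).dir t v ↔
      (E j t v
        ∨ (∃ u, E j t u ∧ (u ≠ v ∧ u ∈ W ∧ v ∈ W) ∧ Relation.ReflTransGen (E j) u v)
        ∨ ((t ≠ v ∧ t ∈ W ∧ v ∈ W) ∧ Relation.ReflTransGen (E j) t v)) := by
  show (componentDAGEdges E W j (Sum.inl t) (Sum.inl v) ∨ _ ∨ _) ↔ _
  rw [cde_inl]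
  constructor
  · rintro (h | ⟨u, h1, h2, h3⟩ | ⟨h2, h3⟩)
    · exact Or.inl h
    · exact Or.inr (Or.inl ⟨u, cde_inl.mp h1, chPair_comp.mp h2, ancE_comp.mp h3⟩)
    · exact Or.inr (Or.inr ⟨chPair_comp.mp h2, ancE_comp.mp h3⟩)
  · rintro (h | ⟨u, h1, h2, h3⟩ | ⟨h2, h3⟩)
    · exact Or.inl h
    · exact Or.inr (Or.inl ⟨u, cde_inl.mpr h1, chPair_comp.mpr h2, ancE_comp.mpr h3⟩)
    · exact Or.inr (Or.inr ⟨chPair_comp.mpr h2, ancE_comp.mpr h3⟩)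

lemma bidir_comp_iff {j : Fin K} {u v : V} :
    (componentMAG E W j).bidir u v ↔
      ((u ≠ v ∧ u ∈ W ∧ v ∈ W) ∧ ¬ Relation.ReflTransGen (E j) u v
        ∧ ¬ Relation.ReflTransGen (E j) v u) := by
  show (chPair _ u v ∧ _ ∧ _) ↔ _
  rw [chPair_comp, ancE_comp, ancE_comp]

lemma dir_comp_rt (hdag : ∀ j, (MixedGraph.mk (E j) (fun _ _ => False)).Acyclic)
    {j : Fin K} {t v : V} (h : (componentMAG E W j).dir t v) :
    Relation.ReflTransGen (E j) t v ∧ t ≠ v := by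
  rcases dir_comp_iff.mp h with h | ⟨u, h1, h2, h3⟩ | ⟨h2, h3⟩
  · refine ⟨Relation.ReflTransGen.single h, ?_⟩
    rintro rfl; exact hdag j t t h Relation.ReflTransGen.refl
  · refine ⟨Relation.ReflTransGen.head h1 h3, ?_⟩
    rintro rfl; exact hdag j t u h1 h3
  · exact ⟨h3, h2.1⟩

lemma rt_anc_comp {j : Fin K} {u v : V} (h : Relation.ReflTransGen (E j) u v) :
    (componentMAG E W j).Anc u v :=
  Relation.ReflTransGen.mono (fun _ _ he => dir_comp_iff.mpr (Or.inl he)) _ _ h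

/-- Clause 3 edges. -/
lemma cl3 {j : Fin K} {u v : V} (hu : u ∈ W) (hv : v ∈ W) (hne : u ≠ v)
    (h : Relation.ReflTransGen (E j) u v) : (componentMAG E W j).dir u v :=
  dir_comp_iff.mpr (Or.inr (Or.inr ⟨⟨hne, hu, hv⟩, h⟩))

/-- The skip lemma: an edge of `M⁽ʲ⁾` into `x` can be redirected to any `z ∈ W`
strictly below `x`. -/
lemma skip_edge (hdag : ∀ j, (MixedGraph.mk (E j) (fun _ _ => False)).Acyclic)
    {j : Fin K} {t x z : V} (h : (componentMAG E W j).dir t x)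
    (hx : x ∈ W) (hz : z ∈ W) (hxz : x ≠ z) (hrt : Relation.ReflTransGen (E j) x z) :
    (componentMAG E W j).dir t z := by
  rcases dir_comp_iff.mp h with h | ⟨u, h1, h2, h3⟩ | ⟨h2, h3⟩
  · exact dir_comp_iff.mpr (Or.inr (Or.inl ⟨x, h, ⟨hxz, hx, hz⟩, hrt⟩))
  · refine dir_comp_iff.mpr (Or.inr (Or.inl ⟨u, h1, ⟨?_, h2.2.1, hz⟩, h3.trans hrt⟩))
    rintro rfl; exact hxz (rt_antisymm hdag hrt h3)
  · refine dir_comp_iff.mpr (Or.inr (Or.inr ⟨⟨?_, h2.2.1, hz⟩, h3.trans hrt⟩))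
    rintro rfl; exact hxz (rt_antisymm hdag hrt h3)

/- mixture graph structure -/

lemma mix_dir_inl {q p : Fin K × V} :
    (mixtureDAG K E W).dir (Sum.inl q) (Sum.inl p) ↔ q.1 = p.1 ∧ E q.1 q.2 p.2 := by
  constructor
  · rintro (⟨j, u, v, hE, h1, h2⟩ | ⟨j, v, _, h1, _⟩)
    · cases h1; cases h2; exact ⟨rfl, hE⟩
    · exact absurd h1 (by simp)
  · rintro ⟨h1, hE⟩
    exact Or.inl ⟨q.1, q.2, p.2, hE, rfl, by rw [show q.1 = p.1 from h1]⟩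

lemma mix_dir_y {p : Fin K × V} :
    (mixtureDAG K E W).dir (Sum.inr ()) (Sum.inl p) ↔ p.2 ∈ W := by
  constructor
  · rintro (⟨j, u, v, _, h1, _⟩ | ⟨j, v, hv, _, h2⟩)
    · exact absurd h1 (by simp)
    · cases h2; exact hv
  · intro h; exact Or.inr ⟨p.1, p.2, h, rfl, rfl⟩

lemma chPair_mix {q p : Fin K × V} :
    chPair (mixtureDAG K E W).dir q p ↔ q ≠ p ∧ q.2 ∈ W ∧ p.2 ∈ W := by
  unfold chPair
  rw [mix_dir_y, mix_dir_y]

lemma ancE_mix {q p : Fin K × V} :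
    AncE (mixtureDAG K E W).dir (Sum.inl q) (Sum.inl p) ↔
      q.1 = p.1 ∧ Relation.ReflTransGen (E q.1) q.2 p.2 := by
  constructor
  · intro h
    have key : ∀ (x y : (Fin K × V) ⊕ Unit), Relation.ReflTransGen (mixtureDAG K E W).dir x y →
        ∀ q p : Fin K × V, x = Sum.inl q → y = Sum.inl p →
          q.1 = p.1 ∧ Relation.ReflTransGen (E q.1) q.2 p.2 := by
      intro x y h
      induction h using Relation.ReflTransGen.head_induction_on with
      | refl =>
        intro q p h1 h2; rw [h1] at h2; cases h2
        exact ⟨rfl, Relation.ReflTransGen.refl⟩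
      | head hstep _ ih =>
        intro q p h1 h2
        subst h1
        rcases hstep with ⟨j, u, v, hE, hu, hm⟩ | ⟨j, v, _, hu, _⟩
        · cases hu
          obtain ⟨e1, e2⟩ := ih _ _ hm h2
          exact ⟨e1, Relation.ReflTransGen.head hE (by rwa [e1] at e2 ⊢)⟩
        · exact absurd hu (by simp)
    exact key _ _ h q p rfl rfl
  · rintro ⟨h1, h2⟩
    obtain ⟨j, u⟩ := q
    obtain ⟨j', v⟩ := p
    cases h1
    simp only at h2
    induction h2 with
    | refl => exact Relation.ReflTransGen.refl
    | tail hh h2 ih =>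
      exact Relation.ReflTransGen.tail ih (mix_dir_inl.mpr ⟨rfl, h2⟩)

/-- Directed edges of `M_μ` stay within a component and project to component MAG
edges. -/
lemma dir_mix {q p : Fin K × V} (h : (mixtureMAG K E W).dir q p) :
    q.1 = p.1 ∧ (componentMAG E W q.1).dir q.2 p.2 := by
  rcases h with h | ⟨u, h1, h2, h3⟩ | ⟨h2, h3⟩
  · obtain ⟨e, hE⟩ := mix_dir_inl.mp h
    exact ⟨e, dir_comp_iff.mpr (Or.inl hE)⟩
  · obtain ⟨e1, hE⟩ := mix_dir_inl.mp h1
    obtain ⟨hne, huW, hpW⟩ := chPair_mix.mp h2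
    obtain ⟨e2, hrt⟩ := ancE_mix.mp h3
    refine ⟨e1.trans e2, dir_comp_iff.mpr (Or.inr (Or.inl ⟨u.2, hE, ⟨?_, huW, hpW⟩, by rwa [e1]⟩))⟩
    intro huv
    exact hne (Prod.ext e2 huv)
  · obtain ⟨hne, hqW, hpW⟩ := chPair_mix.mp h2
    obtain ⟨e2, hrt⟩ := ancE_mix.mp h3
    refine ⟨e2, dir_comp_iff.mpr (Or.inr (Or.inr ⟨⟨?_, hqW, hpW⟩, hrt⟩))⟩
    intro hqv
    exact hne (Prod.ext e2 hqv)

lemma bid_mix_W {q p : Fin K × V} (h : (mixtureMAG K E W).Bid q p) :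
    q.2 ∈ W ∧ p.2 ∈ W := by
  rcases h with ⟨hch, _, _⟩ | ⟨hch, _, _⟩
  · obtain ⟨_, h1, h2⟩ := chPair_mix.mp hch
    exact ⟨h1, h2⟩
  · obtain ⟨_, h1, h2⟩ := chPair_mix.mp hch
    exact ⟨h2, h1⟩

lemma anc_mix_proj {q p : Fin K × V} (h : (mixtureMAG K E W).Anc q p) :
    (unionGraph E W).Anc q.2 p.2 := by
  induction h with
  | refl => exact Relation.ReflTransGen.refl
  | tail _ h2 ih => exact Relation.ReflTransGen.tail ih ⟨_, (dir_mix h2).2⟩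

lemma active_proj {C : Set V} {q : Fin K × V}
    (h : ∃ z ∈ copySet K C, (mixtureMAG K E W).Anc q z) :
    ∃ c ∈ C, (unionGraph E W).Anc q.2 c := by
  obtain ⟨z, hz, hanc⟩ := h
  exact ⟨z.2, hz, anc_mix_proj hanc⟩

end MixAux

section CombAux

open MixedGraph

variable {V : Type u} {K : ℕ} {E : Fin K → V → V → Prop} {W : Set V} {r : V → V → Prop}

lemma trich (hdag : ∀ j, (MixedGraph.mk (E j) (fun _ _ => False)).Acyclic)
    (hso : IsStrictOrder V r)
    (hr1 : ∀ (j : Fin K) (u v : V), (componentMAG E W j).Anc u v → u ≠ v → r u v)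
    (hr2 : ∀ (j : Fin K) (u v : V), (componentMAG E W j).bidir u v → ¬ r u v ∧ ¬ r v u)
    {u v : V} (hu : u ∈ W) (hv : v ∈ W) (hne : u ≠ v) :
    (∀ m, (componentMAG E W m).bidir u v) ∨ (∀ m, Relation.ReflTransGen (E m) u v)
      ∨ (∀ m, Relation.ReflTransGen (E m) v u) := by
  by_cases h1 : ∃ m, Relation.ReflTransGen (E m) u v
  · obtain ⟨m0, hm0⟩ := h1
    have hruv : r u v := hr1 m0 u v (rt_anc_comp hm0) hne
    refine Or.inr (Or.inl ?_)
    intro m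
    by_contra hm
    have h2 : ¬ Relation.ReflTransGen (E m) v u := by
      intro h2
      have hrvu : r v u := hr1 m v u (rt_anc_comp h2) (Ne.symm hne)
      exact hso.toIrrefl.irrefl u (hso.toIsTrans.trans _ _ _ hruv hrvu)
    exact (hr2 m u v (bidir_comp_iff.mpr ⟨⟨hne, hu, hv⟩, hm, h2⟩)).1 hruv
  · by_cases h2 : ∃ m, Relation.ReflTransGen (E m) v u
    · obtain ⟨m0, hm0⟩ := h2
      have hrvu : r v u := hr1 m0 v u (rt_anc_comp hm0) (Ne.symm hne)
      refine Or.inr (Or.inr ?_)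
      intro m
      by_contra hm
      push_neg at h1
      exact (hr2 m u v (bidir_comp_iff.mpr ⟨⟨hne, hu, hv⟩, h1 m, hm⟩)).2 hrvu
    · push_neg at h1 h2
      exact Or.inl (fun m => bidir_comp_iff.mpr ⟨⟨hne, hu, hv⟩, h1 m, h2 m⟩)

lemma elim_proj {C : Set V} {s : Prop} {p : Fin K × V}
    (H : (s ∧ ∃ z ∈ copySet K C, (mixtureMAG K E W).Anc p z) ∨ (¬ s ∧ p ∉ copySet K C)) :
    (s ∧ ∃ c ∈ C, (unionGraph E W).Anc p.2 c) ∨ (¬ s ∧ p.2 ∉ C) := by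
  rcases H with ⟨hs, hanc⟩ | ⟨hns, hn⟩
  · exact Or.inl ⟨hs, active_proj hanc⟩
  · exact Or.inr ⟨hns, hn⟩

lemma mix_consF_notC {C : Set V} {s : Prop} {p x q : Fin K × V}
    {h : (mixtureMAG K E W).dir p x} {w : (mixtureMAG K E W).Walk x q}
    (hj : (Walk.consF h w).junctionOK (copySet K C) s) : p.2 ∉ C :=
  fun hc => Walk.junctionOK_consF_elim hj hc

lemma false_junc {C : Set V} {p q : Fin K × V} (wμ : (mixtureMAG K E W).Walk p q)
    (hqC : q.2 ∉ C) (hj : wμ.junctionOK (copySet K C) False) : p.2 ∉ C := by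
  cases wμ with
  | nil => exact hqC
  | consF h w => exact mix_consF_notC hj
  | consB h w =>
    rcases Walk.junctionOK_consB_elim hj with ⟨hf, _⟩ | ⟨_, hn⟩
    · exact hf.elim
    · exact hn
  | consBi h w =>
    rcases Walk.junctionOK_consBi_elim hj with ⟨hf, _⟩ | ⟨_, hn⟩
    · exact hf.elim
    · exact hn

/-- The right-skip pack. -/
abbrev RSpack (E : Fin K → V → V → Prop) (W : Set V) (C : Set V) (b t : V) : Prop :=
  t ∈ W ∧ ∃ z, z ∈ W ∧ t ≠ z ∧ (∀ m, Relation.ReflTransGen (E m) t z) ∧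
    ∃ w' : (unionGraph E W).Walk z b, w'.DConn C ∧ w'.junctionOK C True

/-- The skip-entry interface. -/
abbrev SOut (E : Fin K → V → V → Prop) (W : Set V) (C : Set V) (b t : V) : Prop :=
  (∃ w : (unionGraph E W).Walk t b, w.DConn C ∧
    ∀ s : Prop, ((s ∧ ∃ c ∈ C, (unionGraph E W).Anc t c) ∨ (¬ s ∧ t ∉ C)) →
      w.junctionOK C s)
  ∨ (t ∈ C ∧ RSpack E W C b t)

lemma comb (hdag : ∀ j, (MixedGraph.mk (E j) (fun _ _ => False)).Acyclic)
    (hso : IsStrictOrder V r)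
    (hr1 : ∀ (j : Fin K) (u v : V), (componentMAG E W j).Anc u v → u ≠ v → r u v)
    (hr2 : ∀ (j : Fin K) (u v : V), (componentMAG E W j).bidir u v → ¬ r u v ∧ ¬ r v u)
    {C : Set V} {k : Fin K} {b : V} (hbC : b ∉ C) :
    ∀ (p q : Fin K × V) (wμ : (mixtureMAG K E W).Walk p q), q = (k, b) →
      wμ.DConn (copySet K C) →
      ((∃ w : (unionGraph E W).Walk p.2 b, w.DConn C ∧
          ∀ s : Prop, wμ.junctionOK (copySet K C) s → w.junctionOK C s)
        ∨ (p.2 ∈ C ∧ RSpack E W C b p.2))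
      ∧ (∀ t : V, wμ.junctionOK (copySet K C) True → p.2 ∈ C → p.2 ≠ t → p.2 ∈ W → t ∈ W →
          (∀ m, Relation.ReflTransGen (E m) p.2 t) → SOut E W C b t) := by
  intro p q wμ
  induction wμ with
  | nil a =>
    intro hq hD
    subst hq
    constructor
    · exact Or.inl ⟨.nil b, trivial, fun s _ => trivial⟩
    · intro t _ hpC _ _ _ _
      exact absurd hpC hbC
  | @consF p x q h w' ih =>
    intro hq hD
    subst hq
    obtain ⟨hD1, hD2⟩ := hD
    obtain ⟨hpj, hdc⟩ := dir_mix h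
    have IH := ih rfl hD2
    constructor
    · rcases IH.1 with ⟨wx, hDx, hQx⟩ | ⟨hxC, hxW, z, hzW, hxz, hrt, wz, hDz, hTz⟩
      · exact Or.inl ⟨.consF ⟨p.1, hdc⟩ wx, ⟨hQx True hD1, hDx⟩,
          fun s hjs => Walk.junctionOK_consF_intro _ _ (mix_consF_notC hjs)⟩
      · have hdz : (componentMAG E W p.1).dir p.2 z :=
          skip_edge hdag hdc hxW hzW hxz (hrt p.1)
        exact Or.inl ⟨.consF ⟨p.1, hdz⟩ wz, ⟨hTz, hDz⟩,
          fun s hjs => Walk.junctionOK_consF_intro _ _ (mix_consF_notC hjs)⟩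
    · -- Left: the first edge has a tail at p, so p would be a non-collider, yet p ∈ C.
      intro t hjT hpC hpt hpW htW hanc
      exact absurd hpC (mix_consF_notC hjT)
  | @consB p x q h w' ih =>
    intro hq hD
    subst hq
    obtain ⟨hD1, hD2⟩ := hD
    obtain ⟨hxj, hdc⟩ := dir_mix h
    have IH := ih rfl hD2
    have hqC : ((k, b) : Fin K × V).2 ∉ C := hbC
    constructor
    · rcases IH.1 with ⟨wx, hDx, hQx⟩ | ⟨hxC, _⟩
      · exact Or.inl ⟨.consB ⟨x.1, hdc⟩ wx, ⟨hQx False hD1, hDx⟩,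
          fun s hjs => Walk.junctionOK_consB_intro _ _ (elim_proj (Walk.junctionOK_consB_elim hjs))⟩
      · exact absurd hxC (false_junc w' hqC hD1)
    · intro t hjT hpC hpt hpW htW hanc
      have hdt : (componentMAG E W x.1).dir x.2 t :=
        skip_edge hdag hdc hpW htW hpt (hanc x.1)
      rcases IH.1 with ⟨wx, hDx, hQx⟩ | ⟨hxC, _⟩
      · exact Or.inl ⟨.consB ⟨x.1, hdt⟩ wx, ⟨hQx False hD1, hDx⟩,
          fun s hs => Walk.junctionOK_consB_intro _ _ hs⟩
      · exact absurd hxC (false_junc w' hqC hD1)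
  | @consBi p x q h w' ih =>
    intro hq hD
    subst hq
    obtain ⟨pj, pv⟩ := p
    obtain ⟨xj, xv⟩ := x
    obtain ⟨hD1, hD2⟩ := hD
    have IH := ih rfl hD2
    obtain ⟨hpW, hxW⟩ := bid_mix_W h
    by_cases hxp : xv = pv
    · -- self-loop between two copies of the same node
      subst hxp
      constructor
      · rcases IH.1 with ⟨wx, hDx, hQx⟩ | ⟨hxC, hRS⟩
        · refine Or.inl ⟨wx, hDx, fun s hjs => ?_⟩
          have hel := Walk.junctionOK_consBi_elim (C := copySet K C) (h := h) (w := w') hjs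
          exact Walk.junctionOK_transfer wx (hQx True hD1) s (elim_proj (p := (pj, xv)) hel)
        · exact Or.inr ⟨hxC, hRS⟩
      · intro t hjT hpC hpt hpW2 htW hanc
        exact IH.2 t hD1 hpC hpt hpW2 htW hanc
    · -- distinct nodes: poset trichotomy
      have hne : pv ≠ xv := fun he => hxp he.symm
      rcases trich hdag hso hr1 hr2 hpW hxW hne with hBi | hFwd | hBwd
      · -- ∀ m, pv ↔ xv in M⁽ᵐ⁾
        constructor
        · rcases IH.1 with ⟨wx, hDx, hQx⟩ | ⟨hxC, hxW', z, hzW, hxz, hrtxz, wz, hDz, hTz⟩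
          · exact Or.inl ⟨.consBi (Or.inl ⟨pj, hBi pj⟩) wx, ⟨hQx True hD1, hDx⟩,
              fun s hjs => Walk.junctionOK_consBi_intro _ _
                (elim_proj (Walk.junctionOK_consBi_elim hjs))⟩
          · have hne_pz : pv ≠ z := by
              intro he
              exact (bidir_comp_iff.mp (hBi pj)).2.2 (by rw [he]; exact hrtxz pj)
            by_cases hex : ∃ m0, ¬ Relation.ReflTransGen (E m0) pv z
            · obtain ⟨m0, hm0⟩ := hex
              have hnzp : ¬ Relation.ReflTransGen (E m0) z pv := by
                intro hzp
                exact (bidir_comp_iff.mp (hBi m0)).2.2 ((hrtxz m0).trans hzp)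
              have hbid : (componentMAG E W m0).bidir pv z :=
                bidir_comp_iff.mpr ⟨⟨hne_pz, hpW, hzW⟩, hm0, hnzp⟩
              exact Or.inl ⟨.consBi (Or.inl ⟨m0, hbid⟩) wz, ⟨hTz, hDz⟩,
                fun s hjs => Walk.junctionOK_consBi_intro _ _
                  (elim_proj (Walk.junctionOK_consBi_elim hjs))⟩
            · push_neg at hex
              by_cases hpC : pv ∈ C
              · exact Or.inr ⟨hpC, hpW, z, hzW, hne_pz, hex, wz, hDz, hTz⟩
              · exact Or.inl ⟨.consF ⟨pj, cl3 hpW hzW hne_pz (hex pj)⟩ wz, ⟨hTz, hDz⟩,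
                  fun s hjs => Walk.junctionOK_consF_intro _ _ hpC⟩
        · -- Left component in the Bi case
          intro t hjT hpC hpt hpW2 htW hanc
          have h1 : ∀ m, ¬ Relation.ReflTransGen (E m) t xv := by
            intro m ht
            exact (bidir_comp_iff.mp (hBi m)).2.1 ((hanc m).trans ht)
          have htx : t ≠ xv := by
            intro he
            exact (bidir_comp_iff.mp (hBi pj)).2.1 (by rw [← he]; exact hanc pj)
          by_cases hex : ∃ m0, ¬ Relation.ReflTransGen (E m0) xv t
          · obtain ⟨m0, hm0⟩ := hex
            have hbid : (componentMAG E W m0).bidir xv t :=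
              bidir_comp_iff.mpr ⟨⟨Ne.symm htx, hxW, htW⟩, hm0, h1 m0⟩
            rcases IH.1 with ⟨wx, hDx, hQx⟩ | ⟨hxC, hxW', z, hzW, hxz, hrtxz, wz, hDz, hTz⟩
            · exact Or.inl ⟨.consBi (Or.inr ⟨m0, hbid⟩) wx, ⟨hQx True hD1, hDx⟩,
                fun s hs => Walk.junctionOK_consBi_intro _ _ hs⟩
            · have htz : t ≠ z := by
                intro he
                exact hm0 (by rw [he]; exact hrtxz m0)
              rcases trich hdag hso hr1 hr2 htW hzW htz with hB2 | hF2 | hW2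
              · exact Or.inl ⟨.consBi (Or.inl ⟨pj, hB2 pj⟩) wz, ⟨hTz, hDz⟩,
                  fun s hs => Walk.junctionOK_consBi_intro _ _ hs⟩
              · by_cases htC : t ∈ C
                · exact Or.inr ⟨htC, htW, z, hzW, htz, hF2, wz, hDz, hTz⟩
                · exact Or.inl ⟨.consF ⟨pj, cl3 htW hzW htz (hF2 pj)⟩ wz, ⟨hTz, hDz⟩,
                    fun s hs => Walk.junctionOK_consF_intro _ _ htC⟩
              · exact absurd ((hrtxz m0).trans (hW2 m0)) hm0
          · push_neg at hex
            by_cases hxC : xv ∈ C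
            · exact IH.2 t hD1 hxC (Ne.symm htx) hxW htW hex
            · rcases IH.1 with ⟨wx, hDx, hQx⟩ | ⟨hxC', _⟩
              · exact Or.inl ⟨.consB ⟨pj, cl3 hxW htW (Ne.symm htx) (hex pj)⟩ wx,
                  ⟨Walk.junctionOK_of_not wx hxC not_false, hDx⟩,
                  fun s hs => Walk.junctionOK_consB_intro _ _ hs⟩
              · exact absurd hxC' hxC
      · -- ∀ m, pv is an ancestor of xv
        constructor
        · rcases IH.1 with ⟨wx, hDx, hQx⟩ | ⟨hxC, hxW', z, hzW, hxz, hrtxz, wz, hDz, hTz⟩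
          · by_cases hpC : pv ∈ C
            · exact Or.inr ⟨hpC, hpW, xv, hxW, hne, hFwd, wx, hDx, hQx True hD1⟩
            · exact Or.inl ⟨.consF ⟨pj, cl3 hpW hxW hne (hFwd pj)⟩ wx,
                ⟨hQx True hD1, hDx⟩, fun s hjs => Walk.junctionOK_consF_intro _ _ hpC⟩
          · have hrt_pz : ∀ m, Relation.ReflTransGen (E m) pv z :=
              fun m => (hFwd m).trans (hrtxz m)
            have hne_pz : pv ≠ z := by
              intro he
              exact hxp (rt_antisymm hdag (by rw [← he] at hrtxz; exact hrtxz pj) (hFwd pj))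
            by_cases hpC : pv ∈ C
            · exact Or.inr ⟨hpC, hpW, z, hzW, hne_pz, hrt_pz, wz, hDz, hTz⟩
            · exact Or.inl ⟨.consF ⟨pj, cl3 hpW hzW hne_pz (hrt_pz pj)⟩ wz, ⟨hTz, hDz⟩,
                fun s hjs => Walk.junctionOK_consF_intro _ _ hpC⟩
        · -- Left component in the Fwd case
          intro t hjT hpC hpt hpW2 htW hanc
          by_cases hxt : xv = t
          · subst hxt
            rcases IH.1 with ⟨wx, hDx, hQx⟩ | ⟨hxC, hRS⟩
            · exact Or.inl ⟨wx, hDx, fun s hs => Walk.junctionOK_transfer wx (hQx True hD1) s hs⟩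
            · exact Or.inr ⟨hxC, hRS⟩
          · rcases trich hdag hso hr1 hr2 hxW htW hxt with hB2 | hF2 | hW2
            · rcases IH.1 with ⟨wx, hDx, hQx⟩ | ⟨hxC, hxW', z, hzW, hxz, hrtxz, wz, hDz, hTz⟩
              · exact Or.inl ⟨.consBi (Or.inr ⟨pj, hB2 pj⟩) wx, ⟨hQx True hD1, hDx⟩,
                  fun s hs => Walk.junctionOK_consBi_intro _ _ hs⟩
              · have htz : t ≠ z := by
                  intro he
                  exact (bidir_comp_iff.mp (hB2 pj)).2.1 (by rw [he]; exact hrtxz pj)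
                rcases trich hdag hso hr1 hr2 htW hzW htz with hB3 | hF3 | hW3
                · exact Or.inl ⟨.consBi (Or.inl ⟨pj, hB3 pj⟩) wz, ⟨hTz, hDz⟩,
                    fun s hs => Walk.junctionOK_consBi_intro _ _ hs⟩
                · by_cases htC : t ∈ C
                  · exact Or.inr ⟨htC, htW, z, hzW, htz, hF3, wz, hDz, hTz⟩
                  · exact Or.inl ⟨.consF ⟨pj, cl3 htW hzW htz (hF3 pj)⟩ wz, ⟨hTz, hDz⟩,
                      fun s hs => Walk.junctionOK_consF_intro _ _ htC⟩
                · exact absurd ((hrtxz pj).trans (hW3 pj)) (bidir_comp_iff.mp (hB2 pj)).2.1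
            · by_cases hxC : xv ∈ C
              · exact IH.2 t hD1 hxC hxt hxW htW hF2
              · rcases IH.1 with ⟨wx, hDx, hQx⟩ | ⟨hxC', _⟩
                · exact Or.inl ⟨.consB ⟨pj, cl3 hxW htW hxt (hF2 pj)⟩ wx,
                    ⟨Walk.junctionOK_of_not wx hxC not_false, hDx⟩,
                    fun s hs => Walk.junctionOK_consB_intro _ _ hs⟩
                · exact absurd hxC' hxC
            · have htx2 : t ≠ xv := fun he => hxt he.symm
              rcases IH.1 with ⟨wx, hDx, hQx⟩ | ⟨hxC, hxW', z, hzW, hxz, hrtxz, wz, hDz, hTz⟩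
              · by_cases htC : t ∈ C
                · exact Or.inr ⟨htC, htW, xv, hxW, htx2, hW2, wx, hDx, hQx True hD1⟩
                · exact Or.inl ⟨.consF ⟨pj, cl3 htW hxW htx2 (hW2 pj)⟩ wx,
                    ⟨hQx True hD1, hDx⟩, fun s hs => Walk.junctionOK_consF_intro _ _ htC⟩
              · have hrt_tz : ∀ m, Relation.ReflTransGen (E m) t z :=
                  fun m => (hW2 m).trans (hrtxz m)
                have htz : t ≠ z := by
                  intro he
                  exact hxt (rt_antisymm hdag (by rw [← he] at hrtxz; exact hrtxz pj) (hW2 pj))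
                by_cases htC : t ∈ C
                · exact Or.inr ⟨htC, htW, z, hzW, htz, hrt_tz, wz, hDz, hTz⟩
                · exact Or.inl ⟨.consF ⟨pj, cl3 htW hzW htz (hrt_tz pj)⟩ wz, ⟨hTz, hDz⟩,
                    fun s hs => Walk.junctionOK_consF_intro _ _ htC⟩
      · -- ∀ m, xv is an ancestor of pv
        constructor
        · by_cases hxC : xv ∈ C
          · have hS := IH.2 pv hD1 hxC hxp hxW hpW hBwd
            rcases hS with ⟨wt, hDt, hTt⟩ | ⟨hpC, hRS⟩
            · exact Or.inl ⟨wt, hDt,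
                fun s hjs => hTt s (elim_proj (Walk.junctionOK_consBi_elim hjs))⟩
            · exact Or.inr ⟨hpC, hRS⟩
          · rcases IH.1 with ⟨wx, hDx, hQx⟩ | ⟨hxC', _⟩
            · exact Or.inl ⟨.consB ⟨pj, cl3 hxW hpW hxp (hBwd pj)⟩ wx,
                ⟨Walk.junctionOK_of_not wx hxC not_false, hDx⟩,
                fun s hjs => Walk.junctionOK_consB_intro _ _
                  (elim_proj (Walk.junctionOK_consBi_elim hjs))⟩
            · exact absurd hxC' hxC
        · -- Left component in the Bwd case
          intro t hjT hpC hpt hpW2 htW hanc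
          have hrt_xt : ∀ m, Relation.ReflTransGen (E m) xv t :=
            fun m => (hBwd m).trans (hanc m)
          have hxt : xv ≠ t := by
            intro he
            exact hxp (rt_antisymm hdag (hBwd pj) (by rw [he]; exact hanc pj))
          by_cases hxC : xv ∈ C
          · exact IH.2 t hD1 hxC hxt hxW htW hrt_xt
          · rcases IH.1 with ⟨wx, hDx, hQx⟩ | ⟨hxC', _⟩
            · exact Or.inl ⟨.consB ⟨pj, cl3 hxW htW hxt (hrt_xt pj)⟩ wx,
                ⟨Walk.junctionOK_of_not wx hxC not_false, hDx⟩,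
                fun s hs => Walk.junctionOK_consB_intro _ _ hs⟩
            · exact absurd hxC' hxC

end CombAux

/-- Lemma 9, Step 2: under poset compatibility, a d-connecting path
given `[C]` between `a⁽ⁱ⁾` and `b⁽ᵏ⁾` in `M_μ` yields a d-connecting path given `C`
between `a` and `b` in the union graph `M_∪`. -/
theorem mixture_connecting_path_implies_union_connecting_path
    {V : Type u} {K : ℕ} (E : Fin K → V → V → Prop)
    (hdag : ∀ j, (MixedGraph.mk (E j) (fun _ _ => False)).Acyclic)
    (W : Set V) (hW : ∀ v, ParentsVary E v → v ∈ W)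
    (hcomp : PosetCompatible E W)
    (a b : V) (C : Set V) (haC : a ∉ C) (hbC : b ∉ C)
    (i k : Fin K)
    (w : (mixtureMAG K E W).Walk (i, a) (k, b))
    (hpath : w.IsPath) (hconn : w.DConn (copySet K C)) :
    ∃ w' : (unionGraph E W).Walk a b, w'.IsPath ∧ w'.DConn C := by
  obtain ⟨r, hso, hr1, hr2⟩ := hcomp
  have hcomb := comb (E := E) (W := W) hdag hso hr1 hr2 (C := C) (k := k) hbC
    (i, a) (k, b) w rfl hconn
  rcases hcomb.1 with ⟨w', hD', _⟩ | ⟨haC', _⟩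
  · have hGr : ∀ u v, (unionGraph E W).dir u v → r u v := by
      intro u v hd
      obtain ⟨j, hdj⟩ := hd
      exact hr1 j u v (Relation.ReflTransGen.single hdj) (dir_comp_rt hdag hdj).2
    exact MixedGraph.walk_to_path hGr (fun x => hso.toIrrefl.irrefl x)
      (fun {x y z} hxy hyz => hso.toIsTrans.trans x y z hxy hyz)
      w'.support.length w' le_rfl hD'
  · exact absurd haC' haC
end

section
/- Define F : ℝ⁴ → ℝ by F(x₁, x₂, x₃, x₄) = e^{-(x₁² + x₂² + x₃² + x₄²)/2} · ( e^{x₁x₂ − x₁²/2} + e^{x₃x₄ − x₄²/2} ). Then there do not exist functions f : ℝ³ → ℝ and g : ℝ³ → ℝ such that F(x₁, x₂, x₃, x₄) = f(x₁, x₂, x₃) · g(x₂, x₃, x₄) for all (x₁, x₂, x₃, x₄) ∈ ℝ⁴. (This is the density factorization that would be required for X₁ ⊥ X₄ | (X₂, X₃) in the equal-weights mixture of the two Gaussian DAG models of the counter-example, so the mother-graph Markov property fails.) -/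
set_option maxHeartbeats 1000000

attribute [local instance] Classical.propDecidable

universe u

open MixedGraph

/-- counter-example to the mother-graph Markov property: the mixture
density `F(x₁,x₂,x₃,x₄) = e^{-(x₁²+x₂²+x₃²+x₄²)/2}(e^{x₁x₂-x₁²/2} + e^{x₃x₄-x₄²/2})`
does not factor as `f(x₁,x₂,x₃) · g(x₂,x₃,x₄)`. -/
theorem mother_graph_counterexample :
    ¬ ∃ (f g : ℝ → ℝ → ℝ → ℝ),
      ∀ x₁ x₂ x₃ x₄ : ℝ,
        Real.exp (-(x₁ ^ 2 + x₂ ^ 2 + x₃ ^ 2 + x₄ ^ 2) / 2) *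
            (Real.exp (x₁ * x₂ - x₁ ^ 2 / 2) + Real.exp (x₃ * x₄ - x₄ ^ 2 / 2)) =
          f x₁ x₂ x₃ * g x₂ x₃ x₄ := by
  rintro ⟨f, g, h⟩
  set F : ℝ → ℝ → ℝ → ℝ → ℝ := fun x₁ x₂ x₃ x₄ =>
    Real.exp (-(x₁ ^ 2 + x₂ ^ 2 + x₃ ^ 2 + x₄ ^ 2) / 2) *
      (Real.exp (x₁ * x₂ - x₁ ^ 2 / 2) + Real.exp (x₃ * x₄ - x₄ ^ 2 / 2)) with hF
  have key : F 0 0 0 0 * F 1 0 0 1 = F 0 0 0 1 * F 1 0 0 0 := by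
    rw [hF]
    simp only
    rw [h 0 0 0 0, h 1 0 0 1, h 0 0 0 1, h 1 0 0 0]
    ring
  set c : ℝ := Real.exp (-(1 / 2) : ℝ) with hc
  have hcpos : 0 < c := Real.exp_pos _
  have hcne : c ≠ 1 := by
    have : c < 1 := by
      rw [hc, ← Real.exp_zero]
      exact Real.exp_lt_exp.mpr (by norm_num)
    exact ne_of_lt this
  have e0 : Real.exp (0 : ℝ) = 1 := Real.exp_zero
  have e1 : Real.exp (-1 : ℝ) = c * c := by
    rw [hc, ← Real.exp_add]; norm_num
  have key' : (1 * (1 + 1)) * ((c * c) * (c + c)) = (c * (1 + c)) * (c * (c + 1)) := by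
    have h1 : F 0 0 0 0 = 1 * (1 + 1) := by rw [hF]; norm_num
    have h2 : F 1 0 0 1 = (c * c) * (c + c) := by
      rw [hF]; simp only; rw [hc, ← e1]; norm_num
    have h3 : F 0 0 0 1 = c * (1 + c) := by
      rw [hF]; simp only; rw [hc]; norm_num
    have h4 : F 1 0 0 0 = c * (c + 1) := by
      rw [hF]; simp only; rw [hc]; norm_num
    rw [← h1, ← h2, ← h3, ← h4]; exact key
  have hsq : (c - 1) ^ 2 > 0 := by
    have : c - 1 ≠ 0 := sub_ne_zero.mpr hcne
    positivity
  nlinarith [sq_nonneg c, mul_pos hcpos hcpos]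
end

section
/- Let p^(1), …, p^(K) be strictly positive probability distributions on a finite product state space over V, let p_J(1), …, p_J(K) > 0 sum to 1, and let p_μ = Σ_j p_J(j) p^(j). Let A, B, C ⊆ V be disjoint. If there is a function q(x_A, x_C) such that p^(j)(x_A, x_B | x_C) = q(x_A, x_C) · p^(j)(x_B | x_C) for every j and every state x, then X_A ⊥ X_B | X_C holds in p_μ. -/
set_option maxHeartbeats 1000000

attribute [local instance] Classical.propDecidable

universe u

open MixedGraph

section AuxMix

variable {V : Type} [Fintype V] [DecidableEq V] {σ : V → Type} [∀ v, Fintype (σ v)]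

/-- The number of states agreeing with `w` on `B`, as a real number. -/
noncomputable def Mcount (B : Set V) (w : ∀ v, σ v) : ℝ :=
  ∑ y : ∀ v, σ v, if ∀ v ∈ B, y v = w v then (1 : ℝ) else 0

lemma Mcount_const (B : Set V) (w w' : ∀ v, σ v) : Mcount B w = Mcount B w' := by
  unfold Mcount
  rw [← Equiv.sum_comp (Equiv.piCongrRight fun v =>
    if v ∈ B then Equiv.swap (w' v) (w v) else Equiv.refl (σ v))
    (fun y => if ∀ v ∈ B, y v = w v then (1 : ℝ) else 0)]
  refine Finset.sum_congr rfl fun y _ => ?_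
  congr 1
  simp only [eq_iff_iff, Equiv.piCongrRight_apply, Pi.map_apply]
  constructor <;> intro h v hv
  · have hv' := h v hv
    rw [if_pos hv] at hv'
    rwa [Equiv.swap_apply_eq_iff, Equiv.swap_apply_right] at hv'
  · have hv' := h v hv
    rw [if_pos hv, Equiv.swap_apply_eq_iff, Equiv.swap_apply_right]
    exact hv'

lemma Mcount_pos (B : Set V) (w : ∀ v, σ v) : 0 < Mcount B w := by
  unfold Mcount
  refine Finset.sum_pos' (fun y _ => ?_) ⟨w, Finset.mem_univ _, ?_⟩
  · split_ifs <;> norm_num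
  · rw [if_pos fun v _ => rfl]; norm_num

lemma marg_pos {p : (∀ v, σ v) → ℝ} (hp : ∀ x, 0 < p x) (S : Set V) (x : ∀ v, σ v) :
    0 < marg p S x := by
  unfold marg
  refine Finset.sum_pos' (fun y _ => ?_) ⟨x, Finset.mem_univ _, ?_⟩
  · split_ifs with h
    · exact (hp y).le
    · exact le_refl 0
  · rw [if_pos fun v _ => rfl]; exact hp x

lemma marg_mix {K : ℕ} (pJ : Fin K → ℝ) (p : Fin K → (∀ v, σ v) → ℝ) (S : Set V)
    (x : ∀ v, σ v) :
    marg (fun x => ∑ j, pJ j * p j x) S x = ∑ j, pJ j * marg (p j) S x := by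
  unfold marg
  calc ∑ y : ∀ v, σ v, (if ∀ v ∈ S, y v = x v then ∑ j, pJ j * p j y else 0)
      = ∑ y : ∀ v, σ v, ∑ j, (if ∀ v ∈ S, y v = x v then pJ j * p j y else 0) := by
        refine Finset.sum_congr rfl fun y _ => ?_
        split_ifs with h
        · rfl
        · simp
    _ = ∑ j, ∑ y : ∀ v, σ v, (if ∀ v ∈ S, y v = x v then pJ j * p j y else 0) :=
        Finset.sum_comm
    _ = ∑ j, pJ j * ∑ y : ∀ v, σ v, (if ∀ v ∈ S, y v = x v then p j y else 0) := by
        refine Finset.sum_congr rfl fun j _ => ?_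
        rw [Finset.mul_sum]
        refine Finset.sum_congr rfl fun y _ => ?_
        split_ifs with h
        · rfl
        · simp

lemma sum_marg_patch (p : (∀ v, σ v) → ℝ) (B T : Set V) (hBT : B ⊆ T) (x : ∀ v, σ v) :
    ∑ y : ∀ v, σ v, marg p T (fun v => if v ∈ B then y v else x v)
      = Mcount B x * marg p (T \ B) x := by
  unfold marg
  rw [Finset.sum_comm]
  have step : ∀ w : ∀ v, σ v,
      (∑ y : ∀ v, σ v,
        if ∀ v ∈ T, w v = (if v ∈ B then y v else x v) then p w else 0)
      = Mcount B x * (if ∀ v ∈ T \ B, w v = x v then p w else 0) := by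
    intro w
    have hcond : ∀ y : ∀ v, σ v,
        (∀ v ∈ T, w v = (if v ∈ B then y v else x v)) ↔
          ((∀ v ∈ B, y v = w v) ∧ ∀ v ∈ T \ B, w v = x v) := by
      intro y
      constructor
      · intro h
        constructor
        · intro v hv
          have := h v (hBT hv)
          rw [if_pos hv] at this
          exact this.symm
        · intro v hv
          have := h v hv.1
          rwa [if_neg hv.2] at this
      · rintro ⟨h1, h2⟩ v hv
        by_cases hvB : v ∈ B
        · rw [if_pos hvB]; exact (h1 v hvB).symm
        · rw [if_neg hvB]; exact h2 v ⟨hv, hvB⟩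
    calc (∑ y : ∀ v, σ v,
          if ∀ v ∈ T, w v = (if v ∈ B then y v else x v) then p w else 0)
        = ∑ y : ∀ v, σ v,
            (if ∀ v ∈ B, y v = w v then (1 : ℝ) else 0) *
            (if ∀ v ∈ T \ B, w v = x v then p w else 0) := by
          refine Finset.sum_congr rfl fun y _ => ?_
          rw [if_congr (hcond y) rfl rfl]
          by_cases hP : ∀ v ∈ B, y v = w v
          · by_cases hQ : ∀ v ∈ T \ B, w v = x v
            · rw [if_pos ⟨hP, hQ⟩, if_pos hP, if_pos hQ, one_mul]
            · rw [if_neg (fun hc => hQ hc.2), if_neg hQ, mul_zero]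
          · rw [if_neg (fun hc => hP hc.1), if_neg hP, zero_mul]
      _ = Mcount B w * (if ∀ v ∈ T \ B, w v = x v then p w else 0) := by
          rw [← Finset.sum_mul]; rfl
      _ = Mcount B x * (if ∀ v ∈ T \ B, w v = x v then p w else 0) := by
          rw [Mcount_const B w x]
  rw [Finset.sum_congr rfl fun w _ => step w, ← Finset.mul_sum]
  refine congrArg _ (Finset.sum_congr rfl fun y _ => ?_)
  congr

end AuxMix

/-- if `p⁽ʲ⁾(x_A, x_B | x_C) = q(x_A, x_C) · p⁽ʲ⁾(x_B | x_C)` for a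
common function `q` depending only on the coordinates in `A ∪ C`, for every `j` and
every state, then `X_A ⟂ X_B | X_C` holds in the mixture `p_μ = Σ_j p_J(j) p⁽ʲ⁾`. -/
theorem mixture_ci_from_common_factorization
    {V : Type} [Fintype V] [DecidableEq V] {σ : V → Type} [∀ v, Fintype (σ v)]
    {K : ℕ} (p : Fin K → (∀ v, σ v) → ℝ)
    (hpos : ∀ j, IsPositiveDist (p j))
    (pJ : Fin K → ℝ) (hpJpos : ∀ j, 0 < pJ j) (hpJsum : ∑ j, pJ j = 1)
    (A B C : Set V) (hAB : Disjoint A B) (hAC : Disjoint A C) (hBC : Disjoint B C)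
    (q : (∀ v, σ v) → ℝ)
    (hqdep : ∀ x y : ∀ v, σ v, (∀ v ∈ A ∪ C, x v = y v) → q x = q y)
    (hq : ∀ j x, condProb (p j) (A ∪ B) C x = q x * condProb (p j) B C x) :
    CondIndep (fun x => ∑ j, pJ j * p j x) A B C := by
  have hK : 0 < K := by
    rcases Nat.eq_zero_or_pos K with h | h
    · subst h; simp at hpJsum
    · exact h
  set pμ : (∀ v, σ v) → ℝ := fun x => ∑ j, pJ j * p j x with hpμ
  -- positivity of component marginals
  have hmargj : ∀ j S x, 0 < marg (p j) S x := fun j S x =>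
    marg_pos (hpos j).1 S x
  have hmargμ : ∀ S x, 0 < marg pμ S x := by
    intro S x
    rw [hpμ, marg_mix]
    refine Finset.sum_pos (fun j _ => mul_pos (hpJpos j) (hmargj j S x)) ?_
    exact Finset.univ_nonempty_iff.mpr ⟨⟨0, hK⟩⟩
  -- per-component identity multiplied out
  have hq' : ∀ j x, marg (p j) ((A ∪ B) ∪ C) x = q x * marg (p j) (B ∪ C) x := by
    intro j x
    have := hq j x
    unfold condProb at this
    have hC := hmargj j C x
    field_simp at this
    linarith [this]
  -- mixture identity
  have hqμ : ∀ x, marg pμ ((A ∪ B) ∪ C) x = q x * marg pμ (B ∪ C) x := by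
    intro x
    rw [hpμ, marg_mix, marg_mix, Finset.mul_sum]
    refine Finset.sum_congr rfl fun j _ => ?_
    rw [hq' j x]; ring
  -- set equalities
  have hset1 : ((A ∪ B) ∪ C) \ B = A ∪ C := by
    ext v
    simp only [Set.mem_diff, Set.mem_union]
    constructor
    · rintro ⟨h1 | h2, hB⟩
      · tauto
      · tauto
    · intro h
      rcases h with h | h
      · exact ⟨Or.inl (Or.inl h), Set.disjoint_left.mp hAB h⟩
      · exact ⟨Or.inr h, Set.disjoint_left.mp hBC.symm h⟩
  have hset2 : (B ∪ C) \ B = C := by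
    ext v
    simp only [Set.mem_diff, Set.mem_union]
    constructor
    · rintro ⟨h1 | h2, hB⟩
      · tauto
      · tauto
    · intro h
      exact ⟨Or.inr h, Set.disjoint_left.mp hBC.symm h⟩
  -- key: summation over B-coordinates
  have key : ∀ x, marg pμ (A ∪ C) x = q x * marg pμ C x := by
    intro x
    have hBsub1 : B ⊆ (A ∪ B) ∪ C := fun v hv => Or.inl (Or.inr hv)
    have hBsub2 : B ⊆ B ∪ C := fun v hv => Or.inl hv
    have hpatchq : ∀ y : ∀ v, σ v,
        q (fun v => if v ∈ B then y v else x v) = q x := by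
      intro y
      refine hqdep _ x fun v hv => ?_
      have hvB : v ∉ B := by
        rcases hv with hv | hv
        · exact Set.disjoint_left.mp hAB hv
        · exact Set.disjoint_left.mp hBC.symm hv
      rw [if_neg hvB]
    have hsum : ∑ y : ∀ v, σ v, marg pμ ((A ∪ B) ∪ C) (fun v => if v ∈ B then y v else x v)
        = q x * ∑ y : ∀ v, σ v, marg pμ (B ∪ C) (fun v => if v ∈ B then y v else x v) := by
      rw [Finset.mul_sum]
      refine Finset.sum_congr rfl fun y _ => ?_
      rw [hqμ, hpatchq y]
    rw [sum_marg_patch pμ B ((A ∪ B) ∪ C) hBsub1 x,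
        sum_marg_patch pμ B (B ∪ C) hBsub2 x, hset1, hset2] at hsum
    have hM := Mcount_pos B x (σ := σ)
    have : Mcount B x * marg pμ (A ∪ C) x = Mcount B x * (q x * marg pμ C x) := by
      rw [hsum]; ring
    exact mul_left_cancel₀ (ne_of_gt hM) this
  -- conclude
  intro x hCx
  unfold condProb
  have hC := hmargμ C x
  have h1 := hqμ x
  have h2 := key x
  rw [h1, h2]
  field_simp
end

section
/- Let D be a DAG containing a vertex y of in-degree 0, and let A, B, C be pairwise disjoint sets of vertices of D, none containing y. If A and B are d-separated given C in D, then A and {y} are d-separated given C in D, or B and {y} are d-separated given C in D. -/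
set_option maxHeartbeats 1000000

attribute [local instance] Classical.propDecidable

universe u

open MixedGraph

section AuxProofs

variable {β : Type u} {G : MixedGraph β}

private lemma active_of_notin {C : Set β} {a : β} {p : Prop} (hnp : ¬ p) (h : a ∉ C) :
    G.activeVertex C a p := Or.inr ⟨hnp, h⟩

private lemma notin_of_active {C : Set β} {a : β} {p : Prop} (hnp : ¬ p)
    (h : G.activeVertex C a p) : a ∉ C := by
  rcases h with ⟨hp, _⟩ | ⟨_, h⟩
  · exact (hnp hp).elim
  · exact h

private lemma anc_of_active {C : Set β} {a : β} {p : Prop} (hp : p)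
    (h : G.activeVertex C a p) : ∃ z ∈ C, G.Anc a z := by
  rcases h with ⟨_, h⟩ | ⟨hnp, _⟩
  · exact h
  · exact (hnp hp).elim

private lemma aux_support_cons {a b : β} (w : G.Walk a b) :
    w.support = a :: w.support.tail := by cases w <;> rfl

private lemma aux_start_mem {a b : β} (w : G.Walk a b) : a ∈ w.support := by
  rw [aux_support_cons]; exact List.mem_cons_self

private lemma aux_end_mem {a b : β} (w : G.Walk a b) : b ∈ w.support := by
  induction w with
  | nil a => simp [Walk.support]
  | consF h w ih => exact List.mem_cons_of_mem _ ih
  | consB h w ih => exact List.mem_cons_of_mem _ ih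
  | consBi h w ih => exact List.mem_cons_of_mem _ ih

/-- Reversal of a walk, with an accumulator. -/
private def wrev : {a c d : β} → G.Walk a c → G.Walk a d → G.Walk c d
  | _, _, _, .nil _, acc => acc
  | _, _, _, .consF h w, acc => wrev w (.consB h acc)
  | _, _, _, .consB h w, acc => wrev w (.consF h acc)
  | _, _, _, .consBi h w, acc => wrev w (.consBi (Or.symm h) acc)

private def WIsNil {a b : β} : G.Walk a b → Prop
  | .nil _ => True
  | _ => False

private lemma wrev_support {a c : β} (w : G.Walk a c) : ∀ {d : β} (acc : G.Walk a d),
    (wrev w acc).support = w.support.reverse ++ acc.support.tail := by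
  induction w with
  | nil a =>
    intro d acc
    rw [wrev]
    simp [Walk.support]
    exact aux_support_cons acc
  | consF h w ih =>
    intro d acc
    rw [wrev, ih]
    show _ = (_ :: w.support).reverse ++ _
    rw [List.reverse_cons, List.append_assoc]
    congr 1
    exact aux_support_cons acc
  | consB h w ih =>
    intro d acc
    rw [wrev, ih]
    show _ = (_ :: w.support).reverse ++ _
    rw [List.reverse_cons, List.append_assoc]
    congr 1
    exact aux_support_cons acc
  | consBi h w ih =>
    intro d acc
    rw [wrev, ih]
    show _ = (_ :: w.support).reverse ++ _
    rw [List.reverse_cons, List.append_assoc]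
    congr 1
    exact aux_support_cons acc

private lemma wrev_dconn {C : Set β} (nobid : ∀ u v, ¬ G.Bid u v) {a c : β}
    (w : G.Walk a c) (hw : w.DConn C) : ∀ {d : β} (acc : G.Walk a d), acc.DConn C →
    (WIsNil w ∨ acc.junctionOK C w.arrowAtStart) → (wrev w acc).DConn C := by
  induction w with
  | nil a => intro d acc hacc _; rw [wrev]; exact hacc
  | consF h w ih =>
    intro d acc hacc hj
    rcases hj with hn | hj
    · exact hn.elim
    rw [wrev]
    obtain ⟨j1, d1⟩ : w.junctionOK C True ∧ w.DConn C := hw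
    refine ih d1 _ ⟨hj, hacc⟩ ?_
    cases w with
    | nil _ => exact Or.inl trivial
    | consF h2 w2 =>
      refine Or.inr (active_of_notin (fun hh => hh.1) ?_)
      exact notin_of_active (fun hh => hh.2) j1
    | consB h2 w2 => exact Or.inr j1
    | consBi h2 w2 => exact (nobid _ _ h2).elim
  | consB h w ih =>
    intro d acc hacc hj
    rcases hj with hn | hj
    · exact hn.elim
    rw [wrev]
    obtain ⟨j1, d1⟩ : w.junctionOK C False ∧ w.DConn C := hw
    refine ih d1 _ ⟨hj, hacc⟩ ?_
    cases w with
    | nil _ => exact Or.inl trivial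
    | consF h2 w2 => exact Or.inr j1
    | consB h2 w2 =>
      refine Or.inr (active_of_notin (fun hh => hh.2) ?_)
      exact notin_of_active (fun hh => hh.1) j1
    | consBi h2 w2 => exact (nobid _ _ h2).elim
  | consBi h w ih => exact (nobid _ _ h).elim

/-- On a d-connecting walk toward the source vertex `y`, any vertex with a directed
edge into the start of the walk is an ancestor of `C`. -/
private lemma aux_chain {C : Set β} (nobid : ∀ u v, ¬ G.Bid u v) {y : β}
    (hy : ∀ u, ¬ G.dir u y) :
    ∀ {s u : β} (P : G.Walk s u), u = y → P.DConn C → P.junctionOK C True →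
    ∀ {v : β}, G.dir v s → ∃ z ∈ C, G.Anc v z := by
  intro s u P
  induction P with
  | nil a => intro huy _ _ v hv; subst huy; exact (hy v hv).elim
  | consF h P ih =>
    intro huy hd hj v hv
    obtain ⟨j1, d1⟩ : P.junctionOK C True ∧ P.DConn C := hd
    obtain ⟨z, hz, hanc⟩ := ih huy d1 j1 h
    exact ⟨z, hz, Relation.ReflTransGen.head hv hanc⟩
  | consB h P ih =>
    intro huy hd hj v hv
    obtain ⟨z, hz, hanc⟩ := anc_of_active ⟨trivial, trivial⟩ hj
    exact ⟨z, hz, Relation.ReflTransGen.head hv hanc⟩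
  | consBi h P ih => exact (nobid _ _ h).elim

/-- Dropping the prefix of a d-connecting walk before an occurrence of `v`. -/
private lemma aux_drop {C : Set β} (nobid : ∀ u v, ¬ G.Bid u v) :
    ∀ {u bb : β} (Q : G.Walk u bb), Q.DConn C →
    ∀ v, v ∈ Q.support → ∃ w : G.Walk v bb, w.support <:+ Q.support ∧ w.DConn C ∧
      (¬ w.arrowAtStart → v = bb ∨ v ∉ C ∨ (v = u ∧ ¬ Q.arrowAtStart)) := by
  intro u bb Q
  induction Q with
  | nil a =>
    intro _ v hv
    rw [show (Walk.nil a : G.Walk a a).support = [a] from rfl, List.mem_singleton] at hv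
    subst hv
    exact ⟨Walk.nil v, List.suffix_refl _, trivial, fun _ => Or.inl rfl⟩
  | consF h Q ih =>
    intro hd v hv
    obtain ⟨j1, d1⟩ : Q.junctionOK C True ∧ Q.DConn C := hd
    rcases List.mem_cons.mp hv with hvu | hvQ
    · subst hvu
      exact ⟨Walk.consF h Q, List.suffix_refl _, ⟨j1, d1⟩, fun hna => Or.inr (Or.inr ⟨rfl, hna⟩)⟩
    · obtain ⟨w, suf, dc, th⟩ := ih d1 v hvQ
      refine ⟨w, suf.trans (List.suffix_cons _ _), dc, fun hna => ?_⟩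
      rcases th hna with hvb | hvC | ⟨hvm, hnaQ⟩
      · exact Or.inl hvb
      · exact Or.inr (Or.inl hvC)
      · subst hvm
        cases Q with
        | nil _ => exact Or.inl rfl
        | consF h2 Q2 => exact Or.inr (Or.inl (notin_of_active (fun hh => hh.2) j1))
        | consB h2 Q2 => exact (hnaQ trivial).elim
        | consBi h2 Q2 => exact (nobid _ _ h2).elim
  | consB h Q ih =>
    intro hd v hv
    obtain ⟨j1, d1⟩ : Q.junctionOK C False ∧ Q.DConn C := hd
    rcases List.mem_cons.mp hv with hvu | hvQ
    · subst hvu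
      exact ⟨Walk.consB h Q, List.suffix_refl _, ⟨j1, d1⟩, fun hna => Or.inr (Or.inr ⟨rfl, hna⟩)⟩
    · obtain ⟨w, suf, dc, th⟩ := ih d1 v hvQ
      refine ⟨w, suf.trans (List.suffix_cons _ _), dc, fun hna => ?_⟩
      rcases th hna with hvb | hvC | ⟨hvm, hnaQ⟩
      · exact Or.inl hvb
      · exact Or.inr (Or.inl hvC)
      · subst hvm
        cases Q with
        | nil _ => exact Or.inl rfl
        | consF h2 Q2 => exact Or.inr (Or.inl (notin_of_active (fun hh => hh.2) j1))
        | consB h2 Q2 => exact (hnaQ trivial).elim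
        | consBi h2 Q2 => exact (nobid _ _ h2).elim
  | consBi h Q ih => exact (nobid _ _ h).elim

/-- Main combination lemma: combine a d-connecting path from `v` to `y` with a
d-connecting path `Qr` from `y` to `bb` into a d-connecting path from `v` to `bb`. -/
private lemma aux_main {C : Set β} (nobid : ∀ u v, ¬ G.Bid u v) {y bb : β}
    (hy : ∀ u, ¬ G.dir u y) (hyC : y ∉ C)
    (Qr : G.Walk y bb) (hQn : Qr.support.Nodup) (hQd : Qr.DConn C) :
    ∀ {v u : β} (P : G.Walk v u), u = y → P.support.Nodup → P.DConn C →
    ∃ w : G.Walk v bb, w.support.Nodup ∧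
      (∀ x ∈ w.support, x ∈ P.support ∨ x ∈ Qr.support) ∧
      w.DConn C ∧ ∀ i : Prop, P.junctionOK C i → w.junctionOK C i := by
  intro v u P
  induction P with
  | nil a =>
    intro huy _ _
    subst huy
    obtain ⟨w, suf, dc, _⟩ := aux_drop nobid Qr hQd a (aux_start_mem Qr)
    refine ⟨w, suf.sublist.nodup hQn, fun x hx => Or.inr (suf.sublist.subset hx), dc, ?_⟩
    intro i _
    cases w with
    | nil _ => trivial
    | consF h2 w2 => exact active_of_notin (fun hh => hh.2) hyC
    | consB h2 w2 => exact (hy _ h2).elim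
    | consBi h2 w2 => exact (nobid _ _ h2).elim
  | @consF a s uu h P ih =>
    intro huy hnd hd
    subst huy
    obtain ⟨j1, d1⟩ : P.junctionOK C True ∧ P.DConn C := hd
    rw [show (Walk.consF h P).support = _ :: P.support from rfl, List.nodup_cons] at hnd
    obtain ⟨hvP, hnP⟩ := hnd
    by_cases hv : a ∈ Qr.support
    case pos =>
      obtain ⟨w, suf, dc, th⟩ := aux_drop nobid Qr hQd _ hv
      refine ⟨w, suf.sublist.nodup hQn, fun x hx => Or.inr (suf.sublist.subset hx), dc, ?_⟩
      intro i hi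
      have hvC := notin_of_active (fun hh => hh.2) hi
      cases w with
      | nil _ => trivial
      | consF h2 w2 => exact active_of_notin (fun hh => hh.2) hvC
      | consB h2 w2 =>
        by_cases hi' : i
        · exact Or.inl ⟨⟨hi', trivial⟩, aux_chain nobid hy P rfl d1 j1 h⟩
        · exact active_of_notin (fun hh => hi' hh.1) hvC
      | consBi h2 w2 => exact (nobid _ _ h2).elim
    case neg =>
      obtain ⟨w', n', sub', d'', tr'⟩ := ih rfl hnP d1
      refine ⟨Walk.consF h w', ?_, ?_, ⟨tr' True j1, d''⟩, fun i hi => hi⟩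
      · rw [show (Walk.consF h w').support = _ :: w'.support from rfl, List.nodup_cons]
        exact ⟨fun hm => ((sub' _ hm).elim hvP hv), n'⟩
      · intro x hx
        rw [show (Walk.consF h w').support = _ :: w'.support from rfl, List.mem_cons] at hx
        rcases hx with rfl | hx
        · exact Or.inl (aux_start_mem _)
        · exact (sub' x hx).imp (List.mem_cons_of_mem _) _root_.id
  | @consB a s uu h P ih =>
    intro huy hnd hd
    subst huy
    obtain ⟨j1, d1⟩ : P.junctionOK C False ∧ P.DConn C := hd
    rw [show (Walk.consB h P).support = _ :: P.support from rfl, List.nodup_cons] at hnd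
    obtain ⟨hvP, hnP⟩ := hnd
    by_cases hv : a ∈ Qr.support
    case pos =>
      obtain ⟨w, suf, dc, th⟩ := aux_drop nobid Qr hQd _ hv
      have hwn := suf.sublist.nodup hQn
      refine ⟨w, hwn, fun x hx => Or.inr (suf.sublist.subset hx), dc, ?_⟩
      intro i hi
      cases w with
      | nil _ => trivial
      | consF h2 w2 =>
        rcases th (fun f => f) with hvb | hvC | ⟨hvy, _⟩
        · exfalso
          rw [show (Walk.consF h2 w2).support = _ :: w2.support from rfl,
            List.nodup_cons] at hwn
          exact hwn.1 (hvb ▸ aux_end_mem w2)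
        · exact active_of_notin (fun hh => hh.2) hvC
        · exact (hy _ (hvy ▸ h)).elim
      | consB h2 w2 => exact hi
      | consBi h2 w2 => exact (nobid _ _ h2).elim
    case neg =>
      obtain ⟨w', n', sub', d'', tr'⟩ := ih rfl hnP d1
      refine ⟨Walk.consB h w', ?_, ?_, ⟨tr' False j1, d''⟩, fun i hi => hi⟩
      · rw [show (Walk.consB h w').support = _ :: w'.support from rfl, List.nodup_cons]
        exact ⟨fun hm => ((sub' _ hm).elim hvP hv), n'⟩
      · intro x hx
        rw [show (Walk.consB h w').support = _ :: w'.support from rfl, List.mem_cons] at hx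
        rcases hx with rfl | hx
        · exact Or.inl (aux_start_mem _)
        · exact (sub' x hx).imp (List.mem_cons_of_mem _) _root_.id
  | consBi h P ih => exact fun _ _ _ => (nobid _ _ h).elim

end AuxProofs

/-- in a DAG with a vertex `y` of in-degree 0, if `A` and `B` are
d-separated given `C` (all disjoint, none containing `y`), then `A` and `{y}` are
d-separated given `C`, or `B` and `{y}` are d-separated given `C`. -/
theorem dsep_from_source_vertex
    {β : Type u} (G : MixedGraph β)
    (hdag : G.IsDAG) (y : β) (hy : ∀ u, ¬ G.dir u y)
    (A B C : Set β)
    (hAB : Disjoint A B) (hAC : Disjoint A C) (hBC : Disjoint B C)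
    (hyA : y ∉ A) (hyB : y ∉ B) (hyC : y ∉ C)
    (hsep : G.DSep A B C) :
    G.DSep A {y} C ∨ G.DSep B {y} C := by
  have nobid : ∀ u v, ¬ G.Bid u v := by
    intro u v h
    rcases h with h | h
    · exact hdag.2 _ _ h
    · exact hdag.2 _ _ h
  by_contra hcon
  push_neg at hcon
  obtain ⟨hnA, hnB⟩ := hcon
  have exA : ∃ a, a ∈ A ∧ ∃ w : G.Walk a y, w.IsPath ∧ w.DConn C := by
    by_contra hno
    apply hnA
    intro a ha b hb w hw hd
    rw [Set.mem_singleton_iff] at hb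
    subst hb
    exact hno ⟨a, ha, w, hw, hd⟩
  have exB : ∃ b, b ∈ B ∧ ∃ w : G.Walk b y, w.IsPath ∧ w.DConn C := by
    by_contra hno
    apply hnB
    intro a ha b hb w hw hd
    rw [Set.mem_singleton_iff] at hb
    subst hb
    exact hno ⟨a, ha, w, hw, hd⟩
  obtain ⟨a, ha, P, hPp, hPd⟩ := exA
  obtain ⟨b, hb, Q, hQp, hQd⟩ := exB
  have hQrs : (wrev Q (Walk.nil b)).support = Q.support.reverse := by
    rw [wrev_support]
    simp [Walk.support]
  have hQrn : (wrev Q (Walk.nil b)).support.Nodup := by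
    rw [hQrs]
    exact List.nodup_reverse.mpr hQp
  have hQrd : (wrev Q (Walk.nil b)).DConn C :=
    wrev_dconn nobid Q hQd (Walk.nil b) trivial (Or.inr trivial)
  obtain ⟨w, hwn, _, hwd, _⟩ :=
    aux_main nobid hy hyC (wrev Q (Walk.nil b)) hQrn hQrd P rfl hPp hPd
  exact hsep ha hb w hwn hwd
end
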